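/- arXiv:1511.03069 — 10 statements merged into one kernel-verified Lean document; each statement's English description precedes it below -/
import Mathlib

section
/- If a vertex i of a finite simple graph has degree 1 or 2, then the move T_i does not change the number of connected components of the support of a labeling (the subgraph induced on vertices labeled 1). -/
/-- Reeder's move `T_i`. -/
def move {V : Type} [Fintype V] [DecidableEq V] (D : SimpleGraph V) [DecidableRel D.Adj]
    (i : V) (a : V → ZMod 2) : V → ZMod 2 :=
  fun j => if j = i then a i + ∑ k ∈ D.neighborFinset i, a k else a j

/-- The number of connected components of the support of a labeling:
connected components of the subgraph induced on vertices labeled 1. -/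
noncomputable def numComponents {V : Type} [Fintype V] (D : SimpleGraph V)
    (a : V → ZMod 2) : ℕ :=
  Nat.card (D.induce {v | a v = 1}).ConnectedComponent

open SimpleGraph

lemma pendant_card {V : Type} (G : SimpleGraph V) (s : Set V) (i j : V)
    (hi : i ∉ s) (hj : j ∈ s) (hadj : G.Adj i j)
    (huniq : ∀ y ∈ s, G.Adj i y → y = j) :
    Nat.card (G.induce (insert i s)).ConnectedComponent
      = Nat.card (G.induce s).ConnectedComponent := by
  classical
  have hsub : s ⊆ insert i s := Set.subset_insert i s
  let φ : G.induce s →g G.induce (insert i s) :=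
    ⟨fun x => ⟨x.1, hsub x.2⟩, fun {a b} h => h⟩
  have hmem : ∀ x : ↑(insert i s), (x : V) ≠ i → (x : V) ∈ s := by
    rintro ⟨x, hx⟩ hxi
    rcases hx with rfl | hx
    · exact absurd rfl hxi
    · exact hx
  let r : ↑(insert i s) → ↑s := fun x =>
    if h : (x : V) = i then ⟨j, hj⟩ else ⟨(x : V), hmem x h⟩
  have hstep : ∀ x y : ↑(insert i s), (G.induce (insert i s)).Adj x y →
      (G.induce s).Reachable (r x) (r y) := by
    intro x y hxy
    have hGxy : G.Adj (x : V) (y : V) := hxy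
    by_cases hx : (x : V) = i
    · by_cases hy : (y : V) = i
      · rw [hx, hy] at hGxy; exact absurd hGxy (G.irrefl)
      · have hys : (y : V) ∈ s := hmem y hy
        have hyj : (y : V) = j := by rw [hx] at hGxy; exact huniq _ hys hGxy
        have : r x = r y := by
          simp only [r, dif_pos hx, dif_neg hy]
          exact Subtype.ext hyj.symm
        rw [this]
    · by_cases hy : (y : V) = i
      · have hxs : (x : V) ∈ s := hmem x hx
        have hxj : (x : V) = j := by rw [hy] at hGxy; exact huniq _ hxs hGxy.symm
        have : r x = r y := by
          simp only [r, dif_neg hx, dif_pos hy]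
          exact Subtype.ext hxj
        rw [this]
      · have hadj' : (G.induce s).Adj ⟨(x:V), hmem x hx⟩ ⟨(y:V), hmem y hy⟩ := hGxy
        have heq : r x = ⟨(x:V), hmem x hx⟩ := by simp only [r, dif_neg hx]
        have heq' : r y = ⟨(y:V), hmem y hy⟩ := by simp only [r, dif_neg hy]
        rw [heq, heq']
        exact hadj'.reachable
  have htrans : ∀ u v : ↑(insert i s), (G.induce (insert i s)).Reachable u v →
      (G.induce s).Reachable (r u) (r v) := by
    intro u v h
    rw [SimpleGraph.reachable_iff_reflTransGen] at h
    induction h with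
    | refl => exact Reachable.refl _
    | tail _ h2 ih => exact ih.trans (hstep _ _ h2)
  have hru : ∀ u : ↑s, r (φ u) = u := by
    intro u
    have hne : ((φ u : ↑(insert i s)) : V) ≠ i := fun h => hi (h ▸ u.2)
    simp only [r, dif_neg hne]
    exact Subtype.ext rfl
  let f := ConnectedComponent.map φ
  have hbij : Function.Bijective f := by
    constructor
    · intro c1 c2
      refine ConnectedComponent.ind₂ (β := fun c1 c2 => f c1 = f c2 → c1 = c2) ?_ c1 c2
      intro u v h
      simp only [f, ConnectedComponent.map_mk] at h
      have hreach := htrans _ _ (ConnectedComponent.exact h)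
      rw [hru u, hru v] at hreach
      exact ConnectedComponent.sound hreach
    · intro c
      refine ConnectedComponent.ind (β := fun c => ∃ a, f a = c) ?_ c
      intro x
      by_cases hx : (x : V) = i
      · refine ⟨(G.induce s).connectedComponentMk ⟨j, hj⟩, ?_⟩
        simp only [f, ConnectedComponent.map_mk]
        apply ConnectedComponent.sound
        have : (G.induce (insert i s)).Adj (φ ⟨j, hj⟩) x := by
          show G.Adj j (x : V)
          rw [hx]; exact hadj.symm
        exact this.reachable
      · refine ⟨(G.induce s).connectedComponentMk ⟨(x:V), hmem x hx⟩, ?_⟩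
        simp only [f, ConnectedComponent.map_mk]
        exact congrArg _ (Subtype.ext rfl)
  exact (Nat.card_eq_of_bijective f hbij).symm

lemma move_unique_one_nbr {V : Type} [Fintype V] [DecidableEq V] (D : SimpleGraph V)
    [DecidableRel D.Adj] (i : V) (hdeg : D.degree i = 1 ∨ D.degree i = 2)
    (a : V → ZMod 2) (hsum : ∑ k ∈ D.neighborFinset i, a k = 1) :
    ∃ j, D.Adj i j ∧ a j = 1 ∧ ∀ y, D.Adj i y → a y = 1 → y = j := by
  have h01 : ∀ x : ZMod 2, x = 0 ∨ x = 1 := by decide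
  rcases hdeg with h1 | h2
  · have h1' : (D.neighborFinset i).card = 1 := h1
    obtain ⟨j, hj⟩ := Finset.card_eq_one.mp h1'
    have hmemj : j ∈ D.neighborFinset i := by rw [hj]; exact Finset.mem_singleton_self j
    have haj : a j = 1 := by rwa [hj, Finset.sum_singleton] at hsum
    refine ⟨j, (D.mem_neighborFinset i j).mp hmemj, haj, fun y hy _ => ?_⟩
    have : y ∈ D.neighborFinset i := (D.mem_neighborFinset i y).mpr hy
    rw [hj, Finset.mem_singleton] at this; exact this
  · have h2' : (D.neighborFinset i).card = 2 := h2
    obtain ⟨j, k, hjk, hset⟩ := Finset.card_eq_two.mp h2'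
    have hmemj : j ∈ D.neighborFinset i := by rw [hset]; simp
    have hmemk : k ∈ D.neighborFinset i := by rw [hset]; simp
    have hsum' : a j + a k = 1 := by rwa [hset, Finset.sum_pair hjk] at hsum
    have hmem : ∀ y, D.Adj i y → y = j ∨ y = k := by
      intro y hy
      have : y ∈ D.neighborFinset i := (D.mem_neighborFinset i y).mpr hy
      rw [hset] at this
      simpa using this
    rcases h01 (a j) with haj | haj <;> rcases h01 (a k) with hak | hak
    · rw [haj, hak] at hsum'; exact absurd hsum' (by decide)
    · refine ⟨k, (D.mem_neighborFinset i k).mp hmemk, hak, fun y hy hy1 => ?_⟩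
      rcases hmem y hy with rfl | rfl
      · rw [haj] at hy1; exact absurd hy1 (by decide)
      · rfl
    · refine ⟨j, (D.mem_neighborFinset i j).mp hmemj, haj, fun y hy hy1 => ?_⟩
      rcases hmem y hy with rfl | rfl
      · rfl
      · rw [hak] at hy1; exact absurd hy1 (by decide)
    · rw [haj, hak] at hsum'; exact absurd hsum' (by decide)

/-- If vertex `i` has degree 1 or 2, the move `T_i` does not change the number of
connected components of the support. -/
theorem move_preserves_numComponents_of_degree_le_two {V : Type} [Fintype V] [DecidableEq V]
    (D : SimpleGraph V) [DecidableRel D.Adj] (i : V)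
    (hdeg : D.degree i = 1 ∨ D.degree i = 2) (a : V → ZMod 2) :
    numComponents D (move D i a) = numComponents D a := by
  classical
  have h01 : ∀ x : ZMod 2, x = 0 ∨ x = 1 := by decide
  by_cases hsum : ∑ k ∈ D.neighborFinset i, a k = 0
  · have hma : move D i a = a := by
      funext v
      simp only [move]
      split
      · next h => rw [h, hsum, add_zero]
      · rfl
    rw [hma]
  · have hsum1 : ∑ k ∈ D.neighborFinset i, a k = 1 := by
      rcases h01 (∑ k ∈ D.neighborFinset i, a k) with h | h
      · exact absurd h hsum
      · exact h
    obtain ⟨j, hadj, haj, huniq⟩ := move_unique_one_nbr D i hdeg a hsum1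
    have hji : j ≠ i := hadj.ne'
    rcases h01 (a i) with hai | hai
    · -- i joins the support
      have hset : {v | move D i a v = 1} = insert i {v | a v = 1} := by
        ext v
        simp only [move, Set.mem_setOf_eq, Set.mem_insert_iff]
        by_cases hvi : v = i
        · simp [hvi, hai, hsum1]
        · simp [hvi]
      have hnotin : i ∉ {v | a v = 1} := by simp [Set.mem_setOf_eq, hai]
      unfold numComponents
      rw [hset]
      exact pendant_card D _ i j hnotin haj hadj (fun y hy hyadj => huniq y hyadj hy)
    · -- i leaves the support
      have hbi : move D i a i = 0 := by
        simp only [move, if_pos rfl, hai, hsum1]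
        decide
      have hset : {v | a v = 1} = insert i {v | move D i a v = 1} := by
        ext v
        simp only [move, Set.mem_setOf_eq, Set.mem_insert_iff]
        by_cases hvi : v = i
        · simp [hvi, hai]
        · simp [hvi]
      have hnotin : i ∉ {v | move D i a v = 1} := by
        simp only [Set.mem_setOf_eq, hbi]
        decide
      have hjmem : j ∈ {v | move D i a v = 1} := by
        simp only [Set.mem_setOf_eq, move, if_neg hji]
        exact haj
      have huniq' : ∀ y ∈ {v | move D i a v = 1}, D.Adj i y → y = j := by
        intro y hy hyadj
        have hyi : y ≠ i := hyadj.ne'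
        have : a y = 1 := by
          simpa only [Set.mem_setOf_eq, move, if_neg hyi] using hy
        exact huniq y hyadj this
      unfold numComponents
      conv_rhs => rw [hset]
      exact (pendant_card D _ i j hnotin hjmem hadj huniq').symm
end

section
/- Let D be a finite tree in which every vertex has degree at most 3. Then every move T_i preserves the parity of the number of connected components of the support of a labeling. -/
open SimpleGraph Finset

section Forest

variable {W : Type}

lemma myIsAcyclic_induce {G : SimpleGraph W} (hG : G.IsAcyclic) (s : Set W) :
    (G.induce s).IsAcyclic := by
  intro v c hc
  exact hG (c.map (SimpleGraph.Embedding.induce (G := G) s).toHom)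
    ((SimpleGraph.Walk.map_isCycle_iff_of_injective
      (SimpleGraph.Embedding.induce (G := G) s).injective).2 hc)

lemma myConnected_induce_supp {G : SimpleGraph W} (c : G.ConnectedComponent) :
    (G.induce c.supp).Connected := by
  classical
  obtain ⟨u, hu0⟩ := c.exists_rep
  have hu : G.connectedComponentMk u = c := hu0
  apply SimpleGraph.induce_connected_of_patches u ((ConnectedComponent.mem_supp_iff _ _).mpr hu)
  intro v hv
  rw [ConnectedComponent.mem_supp_iff] at hv
  obtain ⟨p⟩ := SimpleGraph.ConnectedComponent.eq.mp (hu.trans hv.symm)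
  refine ⟨{x | x ∈ p.support}, ?_, p.start_mem_support, p.end_mem_support, ?_⟩
  · intro x hx
    rw [ConnectedComponent.mem_supp_iff]
    exact (SimpleGraph.ConnectedComponent.sound ((p.takeUntil x hx).reachable).symm).trans hu
  · exact (p.connected_induce_support).preconnected _ _

variable [Fintype W]

lemma myCard_induce_edgeFinset (G : SimpleGraph W) [DecidableEq W] [DecidableRel G.Adj]
    [Fintype G.edgeSet] (s : Set W) [DecidablePred (· ∈ s)]
    [Fintype (G.induce s).edgeSet] :
    (G.induce s).edgeFinset.card
      = (G.edgeFinset.filter (fun e => ∀ x ∈ e, x ∈ s)).card := by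
  apply Finset.card_bij (fun e _ => Sym2.map Subtype.val e)
  · intro e he
    induction e using Sym2.ind with
    | _ x y =>
      rw [mem_edgeFinset, mem_edgeSet] at he
      simp only [Sym2.map_pair_eq, Finset.mem_filter, mem_edgeFinset, mem_edgeSet]
      refine ⟨he, ?_⟩
      intro z hz
      rcases Sym2.mem_iff.mp hz with rfl | rfl
      · exact x.2
      · exact y.2
  · intro e1 h1 e2 h2 h
    exact Sym2.map.injective Subtype.val_injective h
  · intro e he
    simp only [Finset.mem_filter, mem_edgeFinset, mem_edgeSet] at he
    obtain ⟨hadj, hmem⟩ := he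
    induction e using Sym2.ind with
    | _ x y =>
      refine ⟨s(⟨x, hmem x (by simp)⟩, ⟨y, hmem y (by simp)⟩), ?_, by simp⟩
      rw [mem_edgeFinset, mem_edgeSet]
      exact hadj

lemma myEdgeFinset_card_eq_sum (G : SimpleGraph W) [DecidableEq W] [DecidableRel G.Adj]
    [Fintype G.edgeSet] [Fintype G.ConnectedComponent] :
    G.edgeFinset.card = ∑ c : G.ConnectedComponent,
      (G.edgeFinset.filter (fun e => ∀ x ∈ e, x ∈ c.supp)).card := by
  classical
  rw [Finset.card_eq_sum_card_fiberwise
    (f := fun e => G.connectedComponentMk e.out.1) (t := Finset.univ)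
    (fun _ _ => Finset.mem_univ _)]
  refine Finset.sum_congr rfl fun c _ => ?_
  congr 1
  apply Finset.filter_congr
  intro e he
  rw [mem_edgeFinset] at he
  induction e using Sym2.ind with
  | _ x y =>
    rw [mem_edgeSet] at he
    have hxy : G.connectedComponentMk x = G.connectedComponentMk y :=
      SimpleGraph.ConnectedComponent.sound he.reachable
    have hout := Sym2.out_fst_mem s(x, y)
    rw [Sym2.mem_iff] at hout
    constructor
    · intro h
      have hxc : G.connectedComponentMk x = c := by
        rcases hout with h1 | h1
        · rw [h1] at h; exact h
        · rw [h1] at h; exact hxy.trans h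
      have hyc : G.connectedComponentMk y = c := hxy.symm.trans hxc
      intro z hz
      rw [ConnectedComponent.mem_supp_iff]
      rcases Sym2.mem_iff.mp hz with rfl | rfl
      · exact hxc
      · exact hyc
    · intro h
      rcases hout with h1 | h1 <;> rw [h1]
      · exact (ConnectedComponent.mem_supp_iff _ _).mp (h x (by simp))
      · exact (ConnectedComponent.mem_supp_iff _ _).mp (h y (by simp))

lemma myForest_card (G : SimpleGraph W) [DecidableEq W] [DecidableRel G.Adj]
    [Fintype G.edgeSet] (hG : G.IsAcyclic) :
    Nat.card G.ConnectedComponent + G.edgeFinset.card = Fintype.card W := by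
  classical
  letI : Fintype G.ConnectedComponent := Fintype.ofFinite _
  rw [Nat.card_eq_fintype_card]
  have hcardW : Fintype.card W = ∑ c : G.ConnectedComponent, Fintype.card c.supp := by
    rw [← Fintype.card_sigma]
    exact Fintype.card_congr (Equiv.sigmaFiberEquiv G.connectedComponentMk).symm
  have htree : ∀ c : G.ConnectedComponent, Fintype.card c.supp
      = (G.edgeFinset.filter (fun e => ∀ x ∈ e, x ∈ c.supp)).card + 1 := by
    intro c
    have h1 : (G.induce c.supp).IsTree := ⟨myConnected_induce_supp c, myIsAcyclic_induce hG _⟩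
    have h2 := h1.card_edgeFinset
    rw [myCard_induce_edgeFinset] at h2
    omega
  rw [hcardW]
  rw [Finset.sum_congr rfl (fun c _ => htree c), Finset.sum_add_distrib,
    ← myEdgeFinset_card_eq_sum, Finset.sum_const, smul_eq_mul, mul_one, Finset.card_univ]
  omega

end Forest
section MainAux

variable {V : Type} [Fintype V] [DecidableEq V]

lemma mySum_eq_card (a : V → ZMod 2) (t : Finset V) :
    (∑ k ∈ t, a k) = ((t.filter (fun k => a k = 1)).card : ZMod 2) := by
  have h01 : ∀ x : ZMod 2, x ≠ 1 → x = 0 := by decide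
  rw [← Finset.sum_filter_add_sum_filter_not t (fun k => a k = 1)]
  rw [Finset.sum_congr rfl (fun k hk => (Finset.mem_filter.mp hk).2),
    Finset.sum_congr rfl (fun k hk => h01 _ (Finset.mem_filter.mp hk).2),
    Finset.sum_const, Finset.sum_const, smul_zero, add_zero, nsmul_eq_mul, mul_one]

lemma myFilter_edge_card_split (D : SimpleGraph V) [DecidableRel D.Adj]
    (i : V) (x : V → ZMod 2) :
    (D.edgeFinset.filter (fun e => ∀ v ∈ e, x v = 1)).card
      = (D.edgeFinset.filter (fun e => (∀ v ∈ e, x v = 1) ∧ i ∉ e)).card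
        + (if x i = 1 then ((D.neighborFinset i).filter (fun k => x k = 1)).card else 0) := by
  classical
  have h0 := Finset.card_filter_add_card_filter_not
    (s := D.edgeFinset.filter (fun e => ∀ v ∈ e, x v = 1)) (p := fun e => i ∉ e)
  rw [Finset.filter_filter, Finset.filter_filter] at h0
  have h1 : (if x i = 1 then ((D.neighborFinset i).filter (fun k => x k = 1)).card else 0)
      = (D.edgeFinset.filter (fun e => (∀ v ∈ e, x v = 1) ∧ ¬ i ∉ e)).card := by
    by_cases hxi : x i = 1
    · rw [if_pos hxi]
      apply Finset.card_bij (fun k _ => s(i, k))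
      · intro k hk
        rw [Finset.mem_filter] at hk
        obtain ⟨hkn, hk1⟩ := hk
        have hadj : D.Adj i k := by simpa using hkn
        rw [Finset.mem_filter, SimpleGraph.mem_edgeFinset, SimpleGraph.mem_edgeSet]
        refine ⟨hadj, ?_, not_not.mpr (Sym2.mem_mk_left _ _)⟩
        intro v hv
        rcases Sym2.mem_iff.mp hv with rfl | rfl
        · exact hxi
        · exact hk1
      · intro k1 hk1 k2 hk2 h
        exact Sym2.congr_right.mp h
      · intro e he
        rw [Finset.mem_filter] at he
        obtain ⟨hee, hall, hie⟩ := he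
        rw [not_not] at hie
        have hspec := Sym2.other_spec hie
        refine ⟨Sym2.Mem.other hie, ?_, hspec⟩
        rw [Finset.mem_filter]
        constructor
        · have : D.Adj i (Sym2.Mem.other hie) := by
            rw [← SimpleGraph.mem_edgeSet, hspec]
            exact SimpleGraph.mem_edgeFinset.mp hee
          simpa using this
        · exact hall _ (Sym2.other_mem hie)
    · rw [if_neg hxi]
      symm
      rw [Finset.card_eq_zero, Finset.filter_eq_empty_iff]
      intro e _ h
      obtain ⟨hall, hie⟩ := h
      exact hxi (hall i (not_not.mp hie))
  omega

end MainAux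

/-- On a finite tree with maximum degree 3, every move preserves the parity of the
number of components of the support of a labeling. -/
theorem move_preserves_parity_of_tree_maxdeg_three {V : Type} [Fintype V] [DecidableEq V]
    (D : SimpleGraph V) [DecidableRel D.Adj] (hT : D.IsTree)
    (hdeg : ∀ v, D.degree v ≤ 3) (i : V) (a : V → ZMod 2) :
    numComponents D (move D i a) % 2 = numComponents D a % 2 := by
  classical
  set d : ℕ := ((D.neighborFinset i).filter (fun k => a k = 1)).card with hd
  have hsum : (∑ k ∈ D.neighborFinset i, a k) = (d : ZMod 2) := mySum_eq_card a _
  rcases Nat.even_or_odd d with he | ho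
  · -- even case: the move does nothing
    have hz : (d : ZMod 2) = 0 := (ZMod.natCast_eq_zero_iff d 2).mpr he.two_dvd
    have : move D i a = a := by
      funext j
      simp only [move]
      split
      · next h => rw [hsum, hz, add_zero, h]
      · rfl
    rw [this]
  · -- odd case
    have hone : (d : ZMod 2) = 1 := by
      obtain ⟨m, hm⟩ := ho
      rw [hm]
      push_cast
      rw [show ((2 : ZMod 2)) = 0 from rfl]
      ring
    set b := move D i a with hb
    have hbj : ∀ j, j ≠ i → b j = a j := by
      intro j hj
      simp only [hb, move, if_neg hj]
    have hbi : b i = a i + 1 := by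
      simp [hb, move, hsum, hone]
    -- the key Euler formula for supports
    have key : ∀ x : V → ZMod 2,
        numComponents D x + (D.edgeFinset.filter (fun e => ∀ v ∈ e, x v = 1)).card
          = (Finset.univ.filter (fun v => x v = 1)).card := by
      intro x
      have hforest := myForest_card (D.induce {v | x v = 1})
        (myIsAcyclic_induce hT.IsAcyclic _)
      rw [myCard_induce_edgeFinset] at hforest
      rw [numComponents]
      have hcard : Fintype.card {v | x v = 1}
          = (Finset.univ.filter (fun v => x v = 1)).card := by
        simp [Set.coe_setOf, Fintype.card_subtype]
      have hfilter : (D.edgeFinset.filter (fun e => ∀ y ∈ e, y ∈ {v | x v = 1}))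
          = (D.edgeFinset.filter (fun e => ∀ v ∈ e, x v = 1)) := by
        apply Finset.filter_congr
        intro e _
        exact Iff.rfl
      rw [hfilter] at hforest
      omega
    have hkb := key b
    have hka := key a
    have hsplit_a := myFilter_edge_card_split D i a
    have hsplit_b := myFilter_edge_card_split D i b
    have ht : (D.edgeFinset.filter (fun e => (∀ v ∈ e, b v = 1) ∧ i ∉ e))
        = (D.edgeFinset.filter (fun e => (∀ v ∈ e, a v = 1) ∧ i ∉ e)) := by
      apply Finset.filter_congr
      intro e _
      constructor
      · rintro ⟨h1, h2⟩
        exact ⟨fun v hv => by rw [← hbj v (fun hvi => h2 (hvi ▸ hv))]; exact h1 v hv, h2⟩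
      · rintro ⟨h1, h2⟩
        exact ⟨fun v hv => by rw [hbj v (fun hvi => h2 (hvi ▸ hv))]; exact h1 v hv, h2⟩
    have hdb : (D.neighborFinset i).filter (fun k => b k = 1)
        = (D.neighborFinset i).filter (fun k => a k = 1) := by
      apply Finset.filter_congr
      intro k hk
      have hadj : D.Adj i k := by simpa using hk
      rw [hbj k hadj.ne']
    rw [ht] at hsplit_b
    rw [hdb] at hsplit_b
    have hdodd : d % 2 = 1 := Nat.odd_iff.mp ho
    have h01 : a i = 0 ∨ a i = 1 := by
      have : ∀ x : ZMod 2, x = 0 ∨ x = 1 := by decide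
      exact this _
    rcases h01 with hai | hai
    · have hbi1 : b i = 1 := by rw [hbi, hai, zero_add]
      have hsupp : Finset.univ.filter (fun v => b v = 1)
          = insert i (Finset.univ.filter (fun v => a v = 1)) := by
        ext j
        simp only [Finset.mem_filter, Finset.mem_univ, true_and, Finset.mem_insert]
        by_cases hj : j = i
        · subst hj; simp [hbi1]
        · rw [hbj j hj]; simp [hj]
      have hnotmem : i ∉ Finset.univ.filter (fun v => a v = 1) := by
        simp [hai]
      have hcards : (Finset.univ.filter (fun v => b v = 1)).card
          = (Finset.univ.filter (fun v => a v = 1)).card + 1 := by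
        rw [hsupp, Finset.card_insert_of_notMem hnotmem]
      rw [if_pos hbi1] at hsplit_b
      rw [if_neg (by rw [hai]; decide)] at hsplit_a
      omega
    · have hbi0 : b i = 0 := by rw [hbi, hai]; decide
      have hsupp : Finset.univ.filter (fun v => a v = 1)
          = insert i (Finset.univ.filter (fun v => b v = 1)) := by
        ext j
        simp only [Finset.mem_filter, Finset.mem_univ, true_and, Finset.mem_insert]
        by_cases hj : j = i
        · subst hj; simp [hai]
        · rw [hbj j hj]; simp [hj]
      have hnotmem : i ∉ Finset.univ.filter (fun v => b v = 1) := by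
        simp [hbi0]
      have hcards : (Finset.univ.filter (fun v => a v = 1)).card
          = (Finset.univ.filter (fun v => b v = 1)).card + 1 := by
        rw [hsupp, Finset.card_insert_of_notMem hnotmem]
      rw [if_neg (by rw [hbi0]; decide)] at hsplit_b
      rw [if_pos hai] at hsplit_a
      omega
end

section
/- More generally, let D be a finite tree and i any vertex. If i has an even number m of neighbors labeled 1, then T_i fixes the labeling; if m = 2k+1 is odd, then T_i changes the number of components of the support by ±2k. In particular every move on a tree preserves the parity of the number of components. -/
set_option linter.unusedSectionVars false

namespace ReederAux

open SimpleGraph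

section
variable {V : Type} (D : SimpleGraph V) (i : V) (S : Set V)

def TouchL (w : V) (hw : w ∈ S) : Prop :=
  ∃ j, ∃ hj : j ∈ S, D.Adj i j ∧ (D.induce S).Reachable ⟨j, hj⟩ ⟨w, hw⟩

def TouchR (v : V) (hv : v ∈ S) : Prop :=
  ∃ j, ∃ hj : j ∈ S, D.Adj i j ∧ (D.induce S).Reachable ⟨v, hv⟩ ⟨j, hj⟩

lemma walk_lemma :
    ∀ (u w : ↥(insert i S)) (_ : (D.induce (insert i S)).Walk u w) (hw : ↑w ∈ S),
      (↑u = i ∧ TouchL D i S w hw) ∨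
      (∃ hu : ↑u ∈ S, (D.induce S).Reachable ⟨u, hu⟩ ⟨w, hw⟩ ∨
        (TouchR D i S u hu ∧ TouchL D i S w hw)) := by
  intro u w p
  induction p with
  | nil =>
    intro hw
    exact Or.inr ⟨hw, Or.inl (Reachable.refl _)⟩
  | @cons u v w h q ih =>
    intro hw
    have hD : D.Adj ↑u ↑v := h
    rcases ih hw with ⟨hvi, j, hj, haj, hr⟩ | ⟨hv, hcase⟩
    · have hui : (u : V) ≠ i := fun e => hD.ne (e.trans hvi.symm)
      have hu : (u : V) ∈ S := u.2.resolve_left hui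
      have hadj : D.Adj i ↑u := by have := hD.symm; rwa [hvi] at this
      exact Or.inr ⟨hu, Or.inr ⟨⟨↑u, hu, hadj, Reachable.refl _⟩, ⟨j, hj, haj, hr⟩⟩⟩
    · by_cases hui : (u : V) = i
      · have hadj : D.Adj i ↑v := by have := hD; rwa [hui] at this
        rcases hcase with hr | ⟨_, htl⟩
        · exact Or.inl ⟨hui, ⟨↑v, hv, hadj, hr⟩⟩
        · exact Or.inl ⟨hui, htl⟩
      · have hu : (u : V) ∈ S := u.2.resolve_left hui
        have hadjS : (D.induce S).Adj ⟨u, hu⟩ ⟨v, hv⟩ := hD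
        rcases hcase with hr | ⟨⟨j, hj, haj, hr⟩, htl⟩
        · exact Or.inr ⟨hu, Or.inl (hadjS.reachable.trans hr)⟩
        · exact Or.inr ⟨hu, Or.inr ⟨⟨j, hj, haj, hadjS.reachable.trans hr⟩, htl⟩⟩

lemma tree_sep (hA : D.IsAcyclic)
    (hi : i ∉ S) {j j' : V} (hj : j ∈ S) (hj' : j' ∈ S) (aj : D.Adj i j) (aj' : D.Adj i j')
    (hne : j ≠ j') : ¬ (D.induce S).Reachable ⟨j, hj⟩ ⟨j', hj'⟩ := by
  intro h
  refine h.elim_path fun p => ?_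
  have hq : ((p.val).map (Embedding.induce S).toHom).IsPath :=
    Walk.map_isPath_of_injective Subtype.val_injective p.2
  set q := ((p.val).map (Embedding.induce S).toHom) with hqdef
  have hiq : i ∉ q.support := by
    intro hiq
    rw [hqdef, Walk.support_map, List.mem_map] at hiq
    obtain ⟨x, _, hx⟩ := hiq
    exact hi (hx ▸ x.2)
  have hp2 : (Walk.cons aj.symm (Walk.cons aj' Walk.nil) : D.Walk j j').IsPath := by
    simp [Walk.isPath_def, aj.ne', hne, aj'.ne]
  have := hA.path_unique ⟨q, hq⟩ ⟨_, hp2⟩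
  apply hiq
  have : q = Walk.cons aj.symm (Walk.cons aj' Walk.nil) := congrArg Subtype.val this
  rw [this]
  simp

lemma key [Fintype V] [DecidableEq V] [DecidableRel D.Adj] (hA : D.IsAcyclic)
    [DecidablePred (· ∈ S)] (hi : i ∉ S) :
    Nat.card (D.induce (insert i S)).ConnectedComponent
      + ((D.neighborFinset i).filter (· ∈ S)).card
      = Nat.card (D.induce S).ConnectedComponent + 1 := by
  classical
  letI : Fintype (D.induce S).ConnectedComponent := Fintype.ofFinite _
  letI : Fintype (D.induce (insert i S)).ConnectedComponent := Fintype.ofFinite _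
  set T : Set V := insert i S with hTdef
  let ι : D.induce S →g D.induce T :=
    ⟨fun v => ⟨v.1, Set.mem_insert_of_mem i v.2⟩, fun h => h⟩
  set f : (D.induce S).ConnectedComponent → (D.induce T).ConnectedComponent :=
    ConnectedComponent.map ι with hfdef
  set Ci : (D.induce T).ConnectedComponent :=
    (D.induce T).connectedComponentMk ⟨i, Set.mem_insert i S⟩ with hCidef
  have claim1 : ∀ (j : V) (hj : j ∈ S), D.Adj i j →
      f ((D.induce S).connectedComponentMk ⟨j, hj⟩) = Ci := by
    intro j hj haj
    have : (D.induce T).Adj ⟨j, Set.mem_insert_of_mem i hj⟩ ⟨i, Set.mem_insert i S⟩ := haj.symm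
    exact ConnectedComponent.sound this.reachable
  have reach_i : ∀ (v : V) (hv : v ∈ S),
      (D.induce T).Reachable ⟨i, Set.mem_insert i S⟩ ⟨v, Set.mem_insert_of_mem i hv⟩ →
      TouchL D i S v hv := by
    intro v hv h
    refine h.elim fun p => ?_
    rcases walk_lemma D i S _ _ p hv with ⟨_, htl⟩ | ⟨hiS, _⟩
    · exact htl
    · exact absurd hiS hi
  have reach_SS : ∀ (v w : V) (hv : v ∈ S) (hw : w ∈ S),
      (D.induce T).Reachable ⟨v, Set.mem_insert_of_mem i hv⟩ ⟨w, Set.mem_insert_of_mem i hw⟩ →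
      (D.induce S).Reachable ⟨v, hv⟩ ⟨w, hw⟩ ∨ TouchR D i S v hv := by
    intro v w hv hw h
    refine h.elim fun p => ?_
    rcases walk_lemma D i S _ _ p hw with ⟨hvi, _⟩ | ⟨hv', hcase⟩
    · exact absurd (hvi ▸ hv) hi
    · rcases hcase with hr | ⟨htr, _⟩
      · exact Or.inl hr
      · exact Or.inr htr
  have claim2 : ∀ C : (D.induce S).ConnectedComponent, f C = Ci ↔
      ∃ j, ∃ hj : j ∈ S, D.Adj i j ∧ C = (D.induce S).connectedComponentMk ⟨j, hj⟩ := by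
    intro C
    constructor
    · intro hC
      obtain ⟨x, rfl⟩ := C.exists_rep
      have hx : (D.induce T).connectedComponentMk ⟨x.1, Set.mem_insert_of_mem i x.2⟩ = Ci := hC
      have hreach := (ConnectedComponent.exact hx).symm
      obtain ⟨j, hj, haj, hr⟩ := reach_i x.1 x.2 hreach
      refine ⟨j, hj, haj, ?_⟩
      have : (⟨x.1, x.2⟩ : ↥S) = x := Subtype.ext rfl
      exact (ConnectedComponent.sound (this ▸ hr)).symm
    · rintro ⟨j, hj, haj, rfl⟩
      exact claim1 j hj haj
  have claim3 : ∀ C C' : (D.induce S).ConnectedComponent,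
      f C = f C' → f C ≠ Ci → C = C' := by
    intro C C' heq hne
    obtain ⟨x, rfl⟩ := C.exists_rep
    obtain ⟨y, rfl⟩ := C'.exists_rep
    have hreach : (D.induce T).Reachable ⟨x.1, Set.mem_insert_of_mem i x.2⟩
        ⟨y.1, Set.mem_insert_of_mem i y.2⟩ := ConnectedComponent.exact heq
    rcases reach_SS x.1 y.1 x.2 y.2 hreach with hr | ⟨j, hj, haj, hr⟩
    · have hx : (⟨x.1, x.2⟩ : ↥S) = x := Subtype.ext rfl
      have hy : (⟨y.1, y.2⟩ : ↥S) = y := Subtype.ext rfl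
      exact ConnectedComponent.sound (hx ▸ hy ▸ hr)
    · exfalso
      apply hne
      have hx : (⟨x.1, x.2⟩ : ↥S) = x := Subtype.ext rfl
      have : (D.induce S).connectedComponentMk x = (D.induce S).connectedComponentMk ⟨j, hj⟩ :=
        ConnectedComponent.sound (hx ▸ hr)
      show f ((D.induce S).connectedComponentMk x) = Ci
      rw [this]
      exact claim1 j hj haj
  have hfibCi : (Finset.univ.filter fun x => f x = Ci).card
      = ((D.neighborFinset i).filter (· ∈ S)).card := by
    refine (Finset.card_bij
      (fun j hj => (D.induce S).connectedComponentMk ⟨j, (Finset.mem_filter.mp hj).2⟩)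
      ?_ ?_ ?_).symm
    · intro j hj
      refine Finset.mem_filter.mpr ⟨Finset.mem_univ _, ?_⟩
      exact claim1 j _ ((mem_neighborFinset D i j).mp (Finset.mem_filter.mp hj).1)
    · intro j hj j' hj' heq
      by_contra hne
      have haj := (mem_neighborFinset D i j).mp (Finset.mem_filter.mp hj).1
      have haj' := (mem_neighborFinset D i j').mp (Finset.mem_filter.mp hj').1
      exact tree_sep D i S hA hi _ _ haj haj' hne (ConnectedComponent.exact heq)
    · intro C hC
      have := (claim2 C).mp (Finset.mem_filter.mp hC).2
      obtain ⟨j, hj, haj, rfl⟩ := this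
      exact ⟨j, Finset.mem_filter.mpr ⟨(mem_neighborFinset D i j).mpr haj, hj⟩, rfl⟩
  have hfib1 : ∀ C, C ≠ Ci → (Finset.univ.filter fun x => f x = C).card = 1 := by
    intro C hC
    obtain ⟨w, rfl⟩ := C.exists_rep
    have hwi : (w : V) ≠ i := by
      intro hwi
      apply hC
      rw [hCidef]
      congr 1
      exact Subtype.ext hwi
    have hw : (w : V) ∈ S := w.2.resolve_left hwi
    rw [Finset.card_eq_one]
    refine ⟨(D.induce S).connectedComponentMk ⟨w.1, hw⟩, ?_⟩
    have hfx : f ((D.induce S).connectedComponentMk ⟨w.1, hw⟩)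
        = (D.induce T).connectedComponentMk w := by
      have hww : (⟨w.1, Set.mem_insert_of_mem i hw⟩ : ↥T) = w := Subtype.ext rfl
      rw [hfdef]
      show (D.induce T).connectedComponentMk ⟨w.1, Set.mem_insert_of_mem i hw⟩ = _
      rw [hww]
    ext y
    simp only [Finset.mem_filter, Finset.mem_univ, true_and, Finset.mem_singleton]
    constructor
    · intro hy
      exact claim3 y _ (hy.trans hfx.symm) (hy.trans_ne hC)
    · rintro rfl
      exact hfx
  have h1 : (Finset.univ : Finset (D.induce S).ConnectedComponent).card
      = ∑ C : (D.induce T).ConnectedComponent, (Finset.univ.filter fun x => f x = C).card :=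
    Finset.card_eq_sum_card_fiberwise (fun x _ => Finset.mem_univ (f x))
  have h2 : ∑ C : (D.induce T).ConnectedComponent, (Finset.univ.filter fun x => f x = C).card
      = (Finset.univ.filter fun x => f x = Ci).card
        + ∑ C ∈ Finset.univ.erase Ci, (Finset.univ.filter fun x => f x = C).card :=
    (Finset.add_sum_erase _ _ (Finset.mem_univ Ci)).symm
  have h3 : ∑ C ∈ Finset.univ.erase Ci, (Finset.univ.filter fun x => f x = C).card
      = (Finset.univ : Finset (D.induce T).ConnectedComponent).card - 1 := by
    rw [Finset.sum_congr rfl (fun C hC => hfib1 C (Finset.mem_erase.mp hC).1)]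
    rw [Finset.sum_const, smul_eq_mul, mul_one, Finset.card_erase_of_mem (Finset.mem_univ _)]
  have hpos : 1 ≤ (Finset.univ : Finset (D.induce T).ConnectedComponent).card :=
    Finset.card_pos.mpr ⟨Ci, Finset.mem_univ _⟩
  rw [Nat.card_eq_fintype_card, Nat.card_eq_fintype_card]
  have hS : Fintype.card (D.induce S).ConnectedComponent
      = (Finset.univ : Finset (D.induce S).ConnectedComponent).card := rfl
  have hT' : Fintype.card (D.induce T).ConnectedComponent
      = (Finset.univ : Finset (D.induce T).ConnectedComponent).card := rfl
  rw [hS, hT', h1, h2, hfibCi, h3]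
  omega

end

section aux2
variable {V : Type} [Fintype V] [DecidableEq V] (D : SimpleGraph V) [DecidableRel D.Adj]
  (i : V) (a : V → ZMod 2)

lemma sum_nbrs : ∑ k ∈ D.neighborFinset i, a k
    = (((D.neighborFinset i).filter (fun k => a k = 1)).card : ZMod 2) := by
  rw [← Finset.sum_filter_add_sum_filter_not (D.neighborFinset i) (fun k => a k = 1)]
  have h2 : ∑ k ∈ (D.neighborFinset i).filter (fun k => ¬ a k = 1), a k = 0 := by
    refine Finset.sum_eq_zero fun x hx => ?_
    have := (Finset.mem_filter.mp hx).2
    revert this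
    generalize a x = y
    revert y; decide
  have h1 : ∑ k ∈ (D.neighborFinset i).filter (fun k => a k = 1), a k
      = (((D.neighborFinset i).filter (fun k => a k = 1)).card : ZMod 2) := by
    rw [Finset.sum_congr rfl (fun x hx => (Finset.mem_filter.mp hx).2)]
    simp [Finset.sum_const]
  rw [h1, h2, add_zero]

end aux2

end ReederAux

open ReederAux in
/-- On a finite tree: if vertex `i` has an even number of neighbors labeled 1, then `T_i`
fixes the labeling; if it has `2k+1` neighbors labeled 1, then `T_i` changes the number of
components of the support by `±2k`. In particular every move preserves the parity of the
number of components. -/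
theorem move_on_tree {V : Type} [Fintype V] [DecidableEq V]
    (D : SimpleGraph V) [DecidableRel D.Adj] (hT : D.IsTree) (i : V) (a : V → ZMod 2) :
    (Even ((D.neighborFinset i).filter (fun k => a k = 1)).card → move D i a = a) ∧
    (∀ k : ℕ, ((D.neighborFinset i).filter (fun k => a k = 1)).card = 2 * k + 1 →
      numComponents D (move D i a) = numComponents D a + 2 * k ∨
      numComponents D a = numComponents D (move D i a) + 2 * k) ∧
    numComponents D (move D i a) % 2 = numComponents D a % 2 := by
  classical
  have part1 : Even ((D.neighborFinset i).filter (fun k => a k = 1)).card → move D i a = a := by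
    intro he
    funext j
    unfold move
    split
    · next hj =>
      subst hj
      rw [sum_nbrs D j a, (ZMod.natCast_eq_zero_iff _ 2).mpr he.two_dvd, add_zero]
    · rfl
  have part2 : ∀ k : ℕ, ((D.neighborFinset i).filter (fun k => a k = 1)).card = 2 * k + 1 →
      numComponents D (move D i a) = numComponents D a + 2 * k ∨
      numComponents D a = numComponents D (move D i a) + 2 * k := by
    intro k hm
    have hsum : ∑ x ∈ D.neighborFinset i, a x = 1 := by
      rw [sum_nbrs D i a, hm]
      push_cast
      rw [show (2 : ZMod 2) = 0 by decide, zero_mul, zero_add]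
    have hmove_i : move D i a i = a i + 1 := by
      unfold move; rw [if_pos rfl, hsum]
    have hmove_ne : ∀ v, v ≠ i → move D i a v = a v := by
      intro v hv; unfold move; rw [if_neg hv]
    have hai : a i = 0 ∨ a i = 1 := by generalize a i = y; revert y; decide
    rcases hai with h0 | h1
    · -- a i = 0 : support grows, components drop by 2k
      set S : Set V := {v | a v = 1} with hSdef
      have hiS : i ∉ S := by simp [hSdef, h0]
      have hset : {v | move D i a v = 1} = insert i S := by
        ext v
        by_cases hv : v = i
        · subst hv
          simp [hmove_i, h0, Set.mem_insert_iff]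
        · simp [hmove_ne v hv, Set.mem_insert_iff, hv, hSdef]
      have hfil : ((D.neighborFinset i).filter (· ∈ S)).card = 2 * k + 1 := by
        rw [← hm]
        congr 1
      have hk := key D i S hT.IsAcyclic hiS
      rw [hfil] at hk
      have hnum : numComponents D (move D i a)
          = Nat.card (D.induce (insert i S)).ConnectedComponent := by
        unfold numComponents
        rw [hset]
      have hnum2 : numComponents D a = Nat.card (D.induce S).ConnectedComponent := rfl
      rw [hnum, hnum2]
      omega
    · -- a i = 1 : support shrinks, components grow by 2k
      set S : Set V := {v | move D i a v = 1} with hSdef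
      have hiS : i ∉ S := by
        simp only [hSdef, Set.mem_setOf_eq, hmove_i, h1]
        decide
      have hset : ({v | a v = 1} : Set V) = insert i S := by
        ext v
        by_cases hv : v = i
        · subst hv
          simp [h1, Set.mem_insert_iff]
        · simp [Set.mem_insert_iff, hv, hSdef, hmove_ne v hv]
      have hfil : ((D.neighborFinset i).filter (· ∈ S)).card = 2 * k + 1 := by
        rw [← hm]
        refine congrArg Finset.card (Finset.filter_congr (fun x hx => ?_))
        have hxi : x ≠ i := fun e => (D.mem_neighborFinset i x).mp (e ▸ hx) |>.ne' e
        simp [hSdef, hmove_ne x hxi]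
      have hk := key D i S hT.IsAcyclic hiS
      rw [hfil] at hk
      have hnum : numComponents D a
          = Nat.card (D.induce (insert i S)).ConnectedComponent := by
        unfold numComponents
        rw [hset]
      have hnum2 : numComponents D (move D i a) = Nat.card (D.induce S).ConnectedComponent := rfl
      rw [hnum, hnum2]
      omega
  refine ⟨part1, part2, ?_⟩
  rcases Nat.even_or_odd ((D.neighborFinset i).filter (fun k => a k = 1)).card with he | ho
  · rw [part1 he]
  · obtain ⟨k, hk⟩ := ho
    rcases part2 k (by omega) with h | h <;> omega
end

section
/- For the path graph A_n (n vertices in a line), two labelings are equivalent under the moves if and only if their supports have the same number of connected components. -/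
/-- One step of Reeder's game: apply some move. -/
def reederStep {V : Type} [Fintype V] [DecidableEq V] (D : SimpleGraph V)
    [DecidableRel D.Adj] (a b : V → ZMod 2) : Prop :=
  ∃ i, b = move D i a

/-- Equivalence of labelings: a finite sequence of moves. -/
def reederEquiv {V : Type} [Fintype V] [DecidableEq V] (D : SimpleGraph V)
    [DecidableRel D.Adj] : (V → ZMod 2) → (V → ZMod 2) → Prop :=
  Relation.ReflTransGen (reederStep D)

/-- The path graph on `n` vertices. -/
def pathG (n : ℕ) : SimpleGraph (Fin n) where
  Adj i j := i.val + 1 = j.val ∨ j.val + 1 = i.val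
  symm := ⟨by intro i j h; tauto⟩
  loopless := ⟨by intro i h; rcases h with h | h <;> omega⟩

instance (n : ℕ) : DecidableRel (pathG n).Adj :=
  fun i j => inferInstanceAs (Decidable (i.val + 1 = j.val ∨ j.val + 1 = i.val))

namespace Reeder
variable {n : ℕ}

lemma zmod2 (x : ZMod 2) : x = 0 ∨ x = 1 := by revert x; decide

/-- predicate: `j` is the left end of a run of ones. -/
def isStart (a : Fin n → ZMod 2) (j : Fin n) : Prop :=
  a j = 1 ∧ (j.val = 0 ∨ ∀ x : Fin n, x.val + 1 = j.val → a x = 0)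

instance (a : Fin n → ZMod 2) : DecidablePred (isStart a) := fun _ => by
  unfold isStart; infer_instance

def starts (a : Fin n → ZMod 2) : Finset (Fin n) := Finset.univ.filter (isStart a)

def kcount (a : Fin n → ZMod 2) : ℕ := (starts a).card

def lv (a : Fin n → ZMod 2) (i : Fin n) : ZMod 2 :=
  if h : 0 < i.val then a ⟨i.val - 1, by have := i.isLt; omega⟩ else 0

def rv (a : Fin n → ZMod 2) (i : Fin n) : ZMod 2 :=
  if h : i.val + 1 < n then a ⟨i.val + 1, h⟩ else 0

lemma sum_neighbors (a : Fin n → ZMod 2) (i : Fin n) :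
    ∑ k ∈ (pathG n).neighborFinset i, a k = lv a i + rv a i := by
  have hnb : (pathG n).neighborFinset i =
      Finset.univ.filter (fun j : Fin n => j.val + 1 = i.val) ∪
      Finset.univ.filter (fun j : Fin n => i.val + 1 = j.val) := by
    ext j
    rw [SimpleGraph.mem_neighborFinset]
    simp [SimpleGraph.mem_neighborFinset, pathG]
    tauto
  rw [hnb, Finset.sum_union]
  · congr 1
    · unfold lv
      split_ifs with h
      · rw [show Finset.univ.filter (fun j : Fin n => j.val + 1 = i.val)
            = {(⟨i.val - 1, by have := i.isLt; omega⟩ : Fin n)} by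
          ext j; simp [Fin.ext_iff]; omega]
        simp
      · rw [show Finset.univ.filter (fun j : Fin n => j.val + 1 = i.val) = ∅ by
          ext j; simp; omega]
        simp
    · unfold rv
      split_ifs with h
      · rw [show Finset.univ.filter (fun j : Fin n => i.val + 1 = j.val)
            = {(⟨i.val + 1, h⟩ : Fin n)} by
          ext j; simp [Fin.ext_iff]; omega]
        simp
      · rw [show Finset.univ.filter (fun j : Fin n => i.val + 1 = j.val) = ∅ by
          ext j; simp; intro h'; have := j.isLt; omega]
        simp
  · rw [Finset.disjoint_filter]
    intro j _ h1 h2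
    omega

lemma move_spec (a : Fin n → ZMod 2) (i : Fin n) :
    move (pathG n) i a = fun j => if j = i then a i + lv a i + rv a i else a j := by
  funext j
  simp only [move, sum_neighbors, add_assoc]

lemma lv_one_pos {a : Fin n → ZMod 2} {i : Fin n} (h : lv a i = 1) : 0 < i.val := by
  by_contra hc
  simp [lv, hc] at h

lemma lv_one {a : Fin n → ZMod 2} {i : Fin n} (h : lv a i = 1) :
    ∀ x : Fin n, x.val + 1 = i.val → a x = 1 := by
  intro x hx
  have hp : 0 < i.val := lv_one_pos h
  unfold lv at h
  rw [dif_pos hp] at h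
  have : x = ⟨i.val - 1, by have := i.isLt; omega⟩ := by
    apply Fin.ext; simp; omega
  rw [this]; exact h

lemma lv_zero {a : Fin n → ZMod 2} {i : Fin n} (h : lv a i = 0) :
    ∀ x : Fin n, x.val + 1 = i.val → a x = 0 := by
  intro x hx
  have hp : 0 < i.val := by omega
  unfold lv at h
  rw [dif_pos hp] at h
  have : x = ⟨i.val - 1, by have := i.isLt; omega⟩ := by
    apply Fin.ext; simp; omega
  rw [this]; exact h

lemma rv_one_lt {a : Fin n → ZMod 2} {i : Fin n} (h : rv a i = 1) : i.val + 1 < n := by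
  by_contra hc
  simp [rv, hc] at h

lemma rv_one {a : Fin n → ZMod 2} {i : Fin n} (h : rv a i = 1) :
    ∀ x : Fin n, x.val = i.val + 1 → a x = 1 := by
  intro x hx
  have hp : i.val + 1 < n := rv_one_lt h
  unfold rv at h
  rw [dif_pos hp] at h
  have : x = ⟨i.val + 1, hp⟩ := by apply Fin.ext; simp; omega
  rw [this]; exact h

lemma rv_zero {a : Fin n → ZMod 2} {i : Fin n} (h : rv a i = 0) :
    ∀ x : Fin n, x.val = i.val + 1 → a x = 0 := by
  intro x hx
  have hp : i.val + 1 < n := by have := x.isLt; omega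
  unfold rv at h
  rw [dif_pos hp] at h
  have : x = ⟨i.val + 1, hp⟩ := by apply Fin.ext; simp; omega
  rw [this]; exact h

end Reeder
namespace Reeder
variable {n : ℕ}

lemma isStart_congr {a b : Fin n → ZMod 2} (j : Fin n) (h1 : a j = b j)
    (h2 : ∀ x : Fin n, x.val + 1 = j.val → a x = b x) :
    isStart a j ↔ isStart b j := by
  unfold isStart
  rw [h1]
  apply and_congr_right'
  apply or_congr_right
  constructor
  · intro h x hx; rw [← h2 x hx]; exact h x hx
  · intro h x hx; rw [h2 x hx]; exact h x hx

lemma kcount_move (a : Fin n → ZMod 2) (i : Fin n) :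
    kcount (move (pathG n) i a) = kcount a := by
  have hb := move_spec a i
  set b := move (pathG n) i a with hbdef
  rcases zmod2 (lv a i) with hL | hL <;> rcases zmod2 (rv a i) with hR | hR
  · -- lv = 0, rv = 0 : b = a
    have : b = a := by
      funext j; rw [hb]; dsimp only
      split_ifs with h
      · subst h; rw [hL, hR, add_zero, add_zero]
      · rfl
    rw [this]
  · -- lv = 0, rv = 1 : start moves between i and i+1
    have hi1 : i.val + 1 < n := rv_one_lt hR
    set i' : Fin n := ⟨i.val + 1, hi1⟩ with hi'def
    have hii' : i ≠ i' := by simp [hi'def, Fin.ext_iff]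
    have hbj : ∀ j : Fin n, j ≠ i → b j = a j := by
      intro j hj; rw [hb]; simp [hj]
    have hbi : b i = a i + 1 := by
      rw [hb]; simp [hL, hR]
    have hai' : a i' = 1 := rv_one hR i' rfl
    have hbi' : b i' = 1 := by rw [hbj i' (Ne.symm hii')]; exact hai'
    rcases zmod2 (a i) with hai | hai
    · -- b i = 1 : starts b = insert i ((starts a).erase i')
      have hbi1 : b i = 1 := by rw [hbi, hai, zero_add]
      have hSa : isStart a i' := by
        refine ⟨hai', Or.inr ?_⟩
        intro x hx
        have : x = i := by apply Fin.ext; simp [hi'def] at hx; omega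
        rw [this]; exact hai
      have hset : starts b = insert i ((starts a).erase i') := by
        ext j
        simp only [starts, Finset.mem_insert, Finset.mem_erase, Finset.mem_filter,
          Finset.mem_univ, true_and]
        by_cases hji : j = i
        · subst hji
          simp only [true_or, iff_true]
          refine ⟨hbi1, ?_⟩
          rcases Nat.eq_zero_or_pos j.val with h0 | h0
          · exact Or.inl h0
          · refine Or.inr ?_
            intro x hx
            rw [hbj x (by simp [Fin.ext_iff]; omega)]
            exact lv_zero hL x hx
        · by_cases hji' : j = i'
          · subst hji'
            have : ¬ isStart b i' := by
              rintro ⟨-, h2⟩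
              rcases h2 with h2 | h2
              · simp [hi'def] at h2
              · have := h2 i (by simp [hi'def])
                rw [hbi1] at this
                exact absurd this (by decide)
            simp [this, hii'.symm, hi'def, Fin.ext_iff]
            exact this
          · have : isStart b j ↔ isStart a j := by
              apply isStart_congr
              · exact hbj j hji
              · intro x hx
                apply hbj
                intro hxe; subst hxe
                exact hji' (by apply Fin.ext; simp [hi'def]; omega)
            simp [hji, hji', this]
        -- done ext
      rw [kcount, kcount, hset]
      have h1 : i ∉ (starts a).erase i' := by
        intro hmem
        have := (Finset.mem_erase.mp hmem).2
        simp only [starts, Finset.mem_filter] at this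
        have : a i = 1 := this.2.1
        rw [hai] at this; exact absurd this (by decide)
      rw [Finset.card_insert_of_notMem h1,
        Finset.card_erase_of_mem (by simp [starts, hSa])]
      have : 0 < (starts a).card := Finset.card_pos.mpr ⟨i', by simp [starts, hSa]⟩
      omega
    · -- a i = 1, b i = 0 : starts b = insert i' ((starts a).erase i)
      have hbi0 : b i = 0 := by rw [hbi, hai]; decide
      have hSa : isStart a i := by
        refine ⟨hai, ?_⟩
        rcases Nat.eq_zero_or_pos i.val with h0 | h0
        · exact Or.inl h0
        · exact Or.inr (lv_zero hL)
      have hset : starts b = insert i' ((starts a).erase i) := by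
        ext j
        simp only [starts, Finset.mem_insert, Finset.mem_erase, Finset.mem_filter,
          Finset.mem_univ, true_and]
        by_cases hji' : j = i'
        · subst hji'
          simp only [true_or, iff_true]
          refine ⟨hbi', Or.inr ?_⟩
          intro x hx
          have : x = i := by apply Fin.ext; simp [hi'def] at hx; omega
          rw [this]; exact hbi0
        · by_cases hji : j = i
          · subst hji
            have h1 : ¬ isStart b j := by
              rintro ⟨h1, -⟩
              rw [hbi0] at h1; exact absurd h1 (by decide)
            simp [h1, hii']
          · have : isStart b j ↔ isStart a j := by
              apply isStart_congr
              · exact hbj j hji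
              · intro x hx
                apply hbj
                intro hxe; subst hxe
                exact hji' (by apply Fin.ext; simp [hi'def]; omega)
            simp [hji, hji', this]
      rw [kcount, kcount, hset]
      have h1 : i' ∉ (starts a).erase i := by
        intro hmem
        have h2 := (Finset.mem_erase.mp hmem).2
        simp only [starts, Finset.mem_filter] at h2
        rcases h2.2.2 with h3 | h3
        · simp [hi'def] at h3
        · have := h3 i (by simp [hi'def])
          rw [hai] at this; exact absurd this (by decide)
      rw [Finset.card_insert_of_notMem h1,
        Finset.card_erase_of_mem (by simp [starts, hSa])]
      have : 0 < (starts a).card := Finset.card_pos.mpr ⟨i, by simp [starts, hSa]⟩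
      omega
  · -- lv = 1, rv = 0 : starts unchanged
    have hbj : ∀ j : Fin n, j ≠ i → b j = a j := by
      intro j hj; rw [hb]; simp [hj]
    have hpos : 0 < i.val := lv_one_pos hL
    have hset : starts b = starts a := by
      apply Finset.filter_congr
      intro j _
      by_cases hji : j = i
      · subst hji
        constructor
        · rintro ⟨-, h2⟩
          rcases h2 with h2 | h2
          · omega
          · have := h2 ⟨j.val - 1, by have := j.isLt; omega⟩ (by simp; omega)
            rw [hbj _ (by simp [Fin.ext_iff]; omega)] at this
            rw [lv_one hL _ (by simp; omega)] at this
            exact absurd this (by decide)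
        · rintro ⟨-, h2⟩
          rcases h2 with h2 | h2
          · omega
          · have := h2 ⟨j.val - 1, by have := j.isLt; omega⟩ (by simp; omega)
            rw [lv_one hL _ (by simp; omega)] at this
            exact absurd this (by decide)
      · by_cases hji' : j.val = i.val + 1
        · have haj : a j = 0 := rv_zero hR j hji'
          have hbj' : b j = 0 := by rw [hbj j hji]; exact haj
          constructor
          · rintro ⟨h1, -⟩; rw [hbj'] at h1; exact absurd h1 (by decide)
          · rintro ⟨h1, -⟩; rw [haj] at h1; exact absurd h1 (by decide)
        · apply isStart_congr
          · exact hbj j hji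
          · intro x hx
            apply hbj
            intro hxe; subst hxe
            omega
    rw [kcount, kcount, hset]
  · -- lv = 1, rv = 1 : b = a
    have : b = a := by
      funext j; rw [hb]; dsimp only
      split_ifs with h
      · subst h; rw [hL, hR]
        rcases zmod2 (a j) with h | h <;> rw [h] <;> decide
      · rfl
    rw [this]

lemma move_move (D : SimpleGraph (Fin n)) [DecidableRel D.Adj] (i : Fin n)
    (a : Fin n → ZMod 2) : move D i (move D i a) = a := by
  have key : ∀ x s : ZMod 2, x + s + s = x := by decide
  funext j
  by_cases hj : j = i
  · subst hj
    have hne : ∀ k ∈ D.neighborFinset j, k ≠ j := by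
      intro k hk h; subst h
      exact (SimpleGraph.notMem_neighborFinset_self D k) hk
    have hs : ∑ k ∈ D.neighborFinset j, (move D j a) k = ∑ k ∈ D.neighborFinset j, a k := by
      apply Finset.sum_congr rfl
      intro k hk
      simp [move, hne k hk]
    have h1 : move D j (move D j a) j = (move D j a) j + ∑ k ∈ D.neighborFinset j, (move D j a) k := by
      simp [move]
    have h2 : (move D j a) j = a j + ∑ k ∈ D.neighborFinset j, a k := by
      simp [move]
    rw [h1, hs, h2, key]
  · simp [move, hj]

lemma reederEquiv_symm (D : SimpleGraph (Fin n)) [DecidableRel D.Adj]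
    {a b : Fin n → ZMod 2} (h : reederEquiv D a b) : reederEquiv D b a := by
  have hsym : Symmetric (reederStep D) := by
    rintro x y ⟨i, rfl⟩
    exact ⟨i, (move_move D i x).symm⟩
  exact (by haveI : Std.Symm (reederStep D) := ⟨fun x y hxy => hsym hxy⟩; exact Std.Symm.symm (r := Relation.ReflTransGen (reederStep D)) _ _ h)

end Reeder
namespace Reeder
variable {n : ℕ}

lemma walk_interval {a : Fin n → ZMod 2} :
    ∀ {u v : ↥{v : Fin n | a v = 1}}
      (_ : ((pathG n).induce {v : Fin n | a v = 1}).Walk u v) (w : Fin n),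
      min u.1.val v.1.val ≤ w.val → w.val ≤ max u.1.val v.1.val → a w = 1 := by
  intro u v p
  induction p with
  | @nil u' =>
    intro w h1 h2
    have : w = u'.1 := by apply Fin.ext; omega
    rw [this]; exact u'.2
  | @cons x y z hadj p ih =>
    intro w h1 h2
    have hxy : (pathG n).Adj x.1 y.1 := hadj
    have hor : x.1.val + 1 = y.1.val ∨ y.1.val + 1 = x.1.val := hxy
    by_cases hw : w.val = x.1.val
    · have : w = x.1 := by apply Fin.ext; omega
      rw [this]; exact x.2
    · exact ih w (by omega) (by omega)

lemma interval_reach {a : Fin n → ZMod 2} (u v : Fin n) (hu : a u = 1) (hv : a v = 1)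
    (huv : u.val ≤ v.val)
    (hall : ∀ w : Fin n, u.val ≤ w.val → w.val ≤ v.val → a w = 1) :
    ((pathG n).induce {v : Fin n | a v = 1}).Reachable ⟨u, hu⟩ ⟨v, hv⟩ := by
  obtain ⟨d, hd⟩ : ∃ d, v.val - u.val = d := ⟨_, rfl⟩
  induction d generalizing u with
  | zero =>
    have : u = v := by apply Fin.ext; omega
    subst this
    exact SimpleGraph.Reachable.refl _
  | succ d ih =>
    have hlt : u.val < v.val := by omega
    have hu1lt : u.val + 1 < n := by have := v.isLt; omega
    set u1 : Fin n := ⟨u.val + 1, hu1lt⟩ with hu1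
    have hau1 : a u1 = 1 := hall u1 (by simp [hu1]) (by simp [hu1]; omega)
    have hadj : ((pathG n).induce {v : Fin n | a v = 1}).Adj ⟨u, hu⟩ ⟨u1, hau1⟩ := by
      show (pathG n).Adj u u1
      exact Or.inl rfl
    have hrest := ih u1 hau1 (by simp [hu1]; omega)
      (fun w h1 h2 => hall w (by simp [hu1] at h1; omega) h2) (by simp [hu1]; omega)
    exact (hadj.reachable).trans hrest

lemma exists_start_reach_aux {a : Fin n → ZMod 2} :
    ∀ (m : ℕ) (v : Fin n), v.val ≤ m → a v = 1 →
      ∃ s : Fin n, isStart a s ∧ s.val ≤ v.val ∧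
        ∀ w : Fin n, s.val ≤ w.val → w.val ≤ v.val → a w = 1 := by
  intro m
  induction m with
  | zero =>
    intro v hv hav
    refine ⟨v, ⟨hav, Or.inl (by omega)⟩, le_refl _, ?_⟩
    intro w h1 h2
    have : w = v := by apply Fin.ext; omega
    rw [this]; exact hav
  | succ m ih =>
    intro v hv hav
    by_cases hs : isStart a v
    · refine ⟨v, hs, le_refl _, ?_⟩
      intro w h1 h2
      have : w = v := by apply Fin.ext; omega
      rw [this]; exact hav
    · have hvpos : 0 < v.val := by
        by_contra h0
        exact hs ⟨hav, Or.inl (by omega)⟩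
      have hx : ∃ x : Fin n, x.val + 1 = v.val ∧ a x ≠ 0 := by
        by_contra hc
        push_neg at hc
        exact hs ⟨hav, Or.inr (fun x hx => hc x hx)⟩
      obtain ⟨x, hx1, hx2⟩ := hx
      have hax : a x = 1 := by
        rcases zmod2 (a x) with h | h
        · exact absurd h hx2
        · exact h
      obtain ⟨s, hs1, hs2, hs3⟩ := ih x (by omega) hax
      refine ⟨s, hs1, by omega, ?_⟩
      intro w h1 h2
      by_cases hw : w.val = v.val
      · have : w = v := by apply Fin.ext; omega
        rw [this]; exact hav
      · exact hs3 w h1 (by omega)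

lemma exists_start_reach {a : Fin n → ZMod 2} (v : Fin n) (hv : a v = 1) :
    ∃ s : Fin n, isStart a s ∧ s.val ≤ v.val ∧
      ∀ w : Fin n, s.val ≤ w.val → w.val ≤ v.val → a w = 1 :=
  exists_start_reach_aux v.val v (le_refl _) hv

lemma numComponents_eq (a : Fin n → ZMod 2) :
    numComponents (pathG n) a = kcount a := by
  classical
  have hmem : ∀ s : (starts a), a s.1 = 1 := by
    intro s
    have := Finset.mem_filter.mp s.2
    exact this.2.1
  set f : (starts a) → ((pathG n).induce {v : Fin n | a v = 1}).ConnectedComponent :=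
    fun s => ((pathG n).induce {v : Fin n | a v = 1}).connectedComponentMk ⟨s.1, hmem s⟩
    with hf
  have hinj : Function.Injective f := by
    intro s t hst
    have hreach := (SimpleGraph.ConnectedComponent.eq).mp hst
    obtain ⟨p⟩ := hreach
    have hint := walk_interval p
    have hss := Finset.mem_filter.mp s.2 |>.2
    have hts := Finset.mem_filter.mp t.2 |>.2
    -- show s = t
    rcases Nat.lt_trichotomy s.1.val t.1.val with h | h | h
    · exfalso
      have htpos : 0 < t.1.val := by omega
      rcases hts.2 with h0 | h0
      · omega
      · have h1 := h0 ⟨t.1.val - 1, by have := t.1.isLt; omega⟩ (by simp; omega)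
        have h2 := hint ⟨t.1.val - 1, by have := t.1.isLt; omega⟩ (by simp only [Fin.val_mk]; omega) (by simp only [Fin.val_mk]; omega)
        rw [h1] at h2
        exact absurd h2 (by decide)
    · exact Subtype.ext (Fin.ext h)
    · exfalso
      have hspos : 0 < s.1.val := by omega
      rcases hss.2 with h0 | h0
      · omega
      · have h1 := h0 ⟨s.1.val - 1, by have := s.1.isLt; omega⟩ (by simp; omega)
        have h2 := hint ⟨s.1.val - 1, by have := s.1.isLt; omega⟩ (by simp only [Fin.val_mk]; omega) (by simp only [Fin.val_mk]; omega)
        rw [h1] at h2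
        exact absurd h2 (by decide)
  have hsurj : Function.Surjective f := by
    intro comp
    induction comp using SimpleGraph.ConnectedComponent.ind with
    | _ v =>
      have hv : a v.1 = 1 := v.2
      obtain ⟨s, hs1, hs2, hs3⟩ := exists_start_reach v.1 hv
      have hsmem : s ∈ starts a := Finset.mem_filter.mpr ⟨Finset.mem_univ _, hs1⟩
      refine ⟨⟨s, hsmem⟩, ?_⟩
      rw [hf]
      apply (SimpleGraph.ConnectedComponent.eq).mpr
      have := interval_reach s v.1 hs1.1 hv hs2 hs3
      convert this using 2
  have := Nat.card_eq_of_bijective f ⟨hinj, hsurj⟩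
  rw [numComponents, ← this, kcount]
  rw [Nat.card_eq_fintype_card, Fintype.card_coe]

end Reeder
namespace Reeder
variable {n : ℕ}

def M (a : Fin n → ZMod 2) : ℕ := ∑ j ∈ Finset.univ.filter (fun j : Fin n => a j = 1), j.val

def canon (k : ℕ) : Fin n → ZMod 2 := fun j => if j.val % 2 = 0 ∧ j.val < 2*k - 1 then 1 else 0

lemma canon_eq_one_iff (k : ℕ) (x : Fin n) :
    canon k x = 1 ↔ (x.val % 2 = 0 ∧ x.val < 2*k - 1) := by
  unfold canon
  split_ifs with h
  · simpa using h
  · constructor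
    · intro h0; exact absurd h0 (by decide)
    · intro hc; exact absurd hc h

lemma canon_zero {k : ℕ} {x : Fin n} (h : ¬(x.val % 2 = 0 ∧ x.val < 2*k - 1)) :
    canon k x = 0 := if_neg h

lemma move_eval (a : Fin n → ZMod 2) (i : Fin n) :
    move (pathG n) i a i = a i + lv a i + rv a i := by
  rw [move_spec]; simp

lemma move_ne (a : Fin n → ZMod 2) {i j : Fin n} (h : j ≠ i) :
    move (pathG n) i a j = a j := by
  rw [move_spec]; simp [h]

lemma lv_eq_zero_of {a : Fin n → ZMod 2} {i : Fin n}
    (h : ∀ x : Fin n, x.val + 1 = i.val → a x = 0) : lv a i = 0 := by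
  unfold lv
  split_ifs with h0
  · exact h _ (by simp; omega)
  · rfl

lemma lv_eq_one_of {a : Fin n → ZMod 2} {i : Fin n} (h0 : 0 < i.val)
    (h : ∀ x : Fin n, x.val + 1 = i.val → a x = 1) : lv a i = 1 := by
  unfold lv; rw [dif_pos h0]; exact h _ (by simp; omega)

lemma rv_eq_zero_of {a : Fin n → ZMod 2} {i : Fin n}
    (h : ∀ x : Fin n, x.val = i.val + 1 → a x = 0) : rv a i = 0 := by
  unfold rv
  split_ifs with h0
  · exact h _ rfl
  · rfl

lemma rv_eq_one_of {a : Fin n → ZMod 2} {i : Fin n} (h0 : i.val + 1 < n)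
    (h : ∀ x : Fin n, x.val = i.val + 1 → a x = 1) : rv a i = 1 := by
  unfold rv; rw [dif_pos h0]; exact h _ rfl

lemma run_right_end (a : Fin n → ZMod 2) (t : Fin n) (h : a t = 1) :
    ∃ t' : Fin n, t.val ≤ t'.val ∧ (∀ x : Fin n, t.val ≤ x.val → x.val ≤ t'.val → a x = 1) ∧
      (∀ x : Fin n, x.val = t'.val + 1 → a x = 0) := by
  classical
  set T := Finset.univ.filter
    (fun w : Fin n => t.val ≤ w.val ∧ ∀ x : Fin n, t.val ≤ x.val → x.val ≤ w.val → a x = 1)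
    with hTd
  have htT : t ∈ T := by
    simp only [hTd, Finset.mem_filter, Finset.mem_univ, true_and]
    refine ⟨le_refl _, fun x h1 h2 => ?_⟩
    have : x = t := Fin.ext (by omega)
    rw [this]; exact h
  have hne : T.Nonempty := ⟨t, htT⟩
  set t' := T.max' hne with ht'
  have ht'mem := T.max'_mem hne
  rw [← ht'] at ht'mem
  simp only [hTd, Finset.mem_filter, Finset.mem_univ, true_and] at ht'mem
  refine ⟨t', ht'mem.1, ht'mem.2, ?_⟩
  intro x hx
  rcases zmod2 (a x) with h0 | h0
  · exact h0
  · exfalso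
    have hxT : x ∈ T := by
      simp only [hTd, Finset.mem_filter, Finset.mem_univ, true_and]
      refine ⟨by omega, ?_⟩
      intro y h1 h2
      by_cases hy : y.val ≤ t'.val
      · exact ht'mem.2 y h1 hy
      · have : y = x := Fin.ext (by omega)
        rw [this]; exact h0
    have hle : x ≤ t' := Finset.le_max' T x hxT
    have : x.val ≤ t'.val := hle
    omega

lemma M_erase {a b : Fin n → ZMod 2} (t : Fin n) (hat : a t = 1) (hbt : b t = 0)
    (ht : 0 < t.val) (hoth : ∀ j : Fin n, j ≠ t → b j = a j) : M b < M a := by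
  classical
  have hset : Finset.univ.filter (fun j : Fin n => b j = 1)
      = (Finset.univ.filter (fun j : Fin n => a j = 1)).erase t := by
    ext x
    simp only [Finset.mem_filter, Finset.mem_erase, Finset.mem_univ, true_and]
    by_cases hx : x = t
    · subst hx
      constructor
      · intro h; rw [hbt] at h; exact absurd h (by decide)
      · intro h; exact absurd rfl h.1
    · rw [hoth x hx]
      simp [hx]
  rw [M, M, hset]
  have hmem : t ∈ Finset.univ.filter (fun j : Fin n => a j = 1) := by simp [hat]
  have hsum : t.val + ∑ x ∈ (Finset.univ.filter (fun j : Fin n => a j = 1)).erase t, x.val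
      = ∑ x ∈ Finset.univ.filter (fun j : Fin n => a j = 1), x.val :=
    Finset.add_sum_erase _ (fun j : Fin n => j.val) hmem
  omega

lemma M_swap {a b : Fin n → ZMod 2} (p t' : Fin n) (hpt : p.val < t'.val)
    (hap : a p = 0) (hbp : b p = 1) (hat : a t' = 1) (hbt : b t' = 0)
    (hoth : ∀ j : Fin n, j ≠ p → j ≠ t' → b j = a j) : M b < M a := by
  classical
  have hpt' : p ≠ t' := by intro h; rw [h] at hpt; omega
  have hset : Finset.univ.filter (fun j : Fin n => b j = 1)
      = insert p ((Finset.univ.filter (fun j : Fin n => a j = 1)).erase t') := by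
    ext x
    simp only [Finset.mem_filter, Finset.mem_insert, Finset.mem_erase, Finset.mem_univ, true_and]
    by_cases hx : x = p
    · subst hx; simp [hbp]
    · by_cases hx' : x = t'
      · subst hx'
        constructor
        · intro h; rw [hbt] at h; exact absurd h (by decide)
        · rintro (h | h)
          · exact absurd h hx
          · exact absurd rfl h.1
      · rw [hoth x hx hx']
        simp [hx, hx']
  rw [M, M, hset]
  have hmemt : t' ∈ Finset.univ.filter (fun j : Fin n => a j = 1) := by simp [hat]
  have hpnot : p ∉ (Finset.univ.filter (fun j : Fin n => a j = 1)).erase t' := by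
    intro h
    have h2 := (Finset.mem_erase.mp h).2
    simp only [Finset.mem_filter, Finset.mem_univ, true_and] at h2
    rw [hap] at h2; exact absurd h2 (by decide)
  rw [Finset.sum_insert hpnot]
  have hsum : t'.val + ∑ x ∈ (Finset.univ.filter (fun j : Fin n => a j = 1)).erase t', x.val
      = ∑ x ∈ Finset.univ.filter (fun j : Fin n => a j = 1), x.val :=
    Finset.add_sum_erase _ (fun j : Fin n => j.val) hmemt
  omega

lemma too_many_starts {a : Fin n → ZMod 2} (j : Fin n) (hjge : 2*(kcount a) - 1 ≤ j.val)
    (hstart : isStart a j)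
    (hmin : ∀ x : Fin n, x.val < j.val → a x = canon (kcount a) x) : False := by
  classical
  set k := kcount a with hk
  set f : ℕ → Fin n := fun m => if h : 2*m < n then ⟨2*m, h⟩ else j with hfd
  have hbound : ∀ m, m < k → 2*m < j.val := by intro m hm; omega
  have hfval : ∀ m, m < k → (f m).val = 2*m := by
    intro m hm
    have h2 : 2*m < n := lt_trans (hbound m hm) j.isLt
    simp [hfd, h2]
  have hfstart : ∀ m, m < k → isStart a (f m) := by
    intro m hm
    have hfv := hfval m hm
    constructor
    · rw [hmin (f m) (by omega)]
      exact (canon_eq_one_iff _ _).mpr ⟨by omega, by omega⟩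
    · rcases Nat.eq_zero_or_pos m with h0 | h0
      · left; omega
      · right
        intro x hx
        rw [hmin x (by omega)]
        apply canon_zero
        intro hc
        have := hc.1
        omega
  have hsub : insert j ((Finset.range k).image f) ⊆ starts a := by
    intro s hs
    rcases Finset.mem_insert.mp hs with h | h
    · subst h; simp [starts, hstart]
    · obtain ⟨m, hm, rfl⟩ := Finset.mem_image.mp h
      rw [Finset.mem_range] at hm
      simp [starts, hfstart m hm]
  have hnotmem : j ∉ (Finset.range k).image f := by
    intro hmem
    obtain ⟨m, hm, hfm⟩ := Finset.mem_image.mp hmem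
    rw [Finset.mem_range] at hm
    have h1 := hfval m hm
    have h2 : j.val = 2*m := by rw [← hfm, h1]
    omega
  have hcard : (insert j ((Finset.range k).image f)).card = k + 1 := by
    rw [Finset.card_insert_of_notMem hnotmem, Finset.card_image_of_injOn, Finset.card_range]
    intro m hm m' hm' hmm
    rw [Finset.mem_coe, Finset.mem_range] at hm hm'
    have h1 := hfval m hm
    have h2 := hfval m' hm'
    rw [hmm] at h1
    omega
  have hle := Finset.card_le_card hsub
  rw [hcard] at hle
  have h2 : (starts a).card = k := hk.symm
  omega

lemma too_few_starts {a : Fin n → ZMod 2} (j : Fin n) (hjlt : j.val < 2*(kcount a) - 1)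
    (hje : j.val % 2 = 0) (haj : a j = 0)
    (hmin : ∀ x : Fin n, x.val < j.val → a x = canon (kcount a) x)
    (hnone : ∀ t : Fin n, j.val < t.val → a t = 0) : False := by
  classical
  set k := kcount a with hk
  have hprop : ∀ s : Fin n, s ∈ starts a → s.val < j.val ∧ s.val % 2 = 0 := by
    intro s hs
    have hss := (Finset.mem_filter.mp hs).2
    have has : a s = 1 := hss.1
    have hslt : s.val < j.val := by
      rcases Nat.lt_trichotomy s.val j.val with h | h | h
      · exact h
      · exfalso
        have : s = j := Fin.ext h
        rw [this, haj] at has; exact absurd has (by decide)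
      · exfalso
        rw [hnone s h] at has; exact absurd has (by decide)
    refine ⟨hslt, ?_⟩
    have hcan := hmin s hslt
    rw [hcan] at has
    exact ((canon_eq_one_iff _ _).mp has).1
  have hle : (starts a).card ≤ (Finset.range (k-1)).card := by
    apply Finset.card_le_card_of_injOn (fun s => s.val / 2)
    · intro s hs
      have := hprop s hs
      simp only [Finset.coe_range, Set.mem_Iio]
      omega
    · intro s hs s' hs' hss
      have h1 := hprop s (Finset.mem_coe.mp hs)
      have h2 := hprop s' (Finset.mem_coe.mp hs')
      apply Fin.ext
      simp only at hss
      omega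
  rw [Finset.card_range] at hle
  have h2 : (starts a).card = k := hk.symm
  omega

lemma reduce_aux : ∀ (m : ℕ) (a : Fin n → ZMod 2), M a < m →
    reederEquiv (pathG n) a (canon (kcount a)) := by
  intro m
  induction m with
  | zero => intro a h; omega
  | succ m ih =>
    intro a hM
    by_cases heq : a = canon (kcount a)
    · rw [show canon (kcount a) = a from heq.symm]
      exact Relation.ReflTransGen.refl
    · set k := kcount a with hk
      set T : Finset (Fin n) := Finset.univ.filter (fun x : Fin n => ¬ a x = canon k x) with hTd
      have hT : T.Nonempty := by
        by_contra hc
        rw [Finset.not_nonempty_iff_eq_empty] at hc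
        apply heq
        funext x
        by_contra hx
        have hmem : x ∈ T := by simp [hTd, hx]
        rw [hc] at hmem
        simp at hmem
      set j := T.min' hT with hjd
      have hjmem := T.min'_mem hT
      rw [← hjd] at hjmem
      simp only [hTd, Finset.mem_filter, Finset.mem_univ, true_and] at hjmem
      have hmin : ∀ x : Fin n, x.val < j.val → a x = canon k x := by
        intro x hx
        by_contra hc
        have hxm : x ∈ T := by simp [hTd, hc]
        have hle : j ≤ x := by rw [hjd]; exact T.min'_le x hxm
        have : j.val ≤ x.val := hle
        omega
      rcases zmod2 (a j) with haj | haj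
      · -- Case B : a j = 0, canon k j = 1
        have hcj : canon k j = 1 := by
          rcases zmod2 (canon k j) with h | h
          · exact absurd (haj.trans h.symm) hjmem
          · exact h
        rw [canon_eq_one_iff] at hcj
        by_cases hex : ∃ t : Fin n, j.val < t.val ∧ a t = 1
        · -- B-i : there is a one to the right; slide it left
          obtain ⟨t0, ht01, ht02⟩ := hex
          set T2 : Finset (Fin n) :=
            Finset.univ.filter (fun t : Fin n => j.val < t.val ∧ a t = 1) with hT2d
          have hT2 : T2.Nonempty := ⟨t0, by
            rw [hT2d]
            simp only [Finset.mem_filter, Finset.mem_univ, true_and]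
            exact ⟨ht01, ht02⟩⟩
          set t := T2.min' hT2 with htd
          have htmem := T2.min'_mem hT2
          rw [← htd] at htmem
          simp only [hT2d, Finset.mem_filter, Finset.mem_univ, true_and] at htmem
          have htmin : ∀ w : Fin n, j.val < w.val → w.val < t.val → a w = 0 := by
            intro w h1 h2
            rcases zmod2 (a w) with h | h
            · exact h
            · exfalso
              have hwT : w ∈ T2 := by
                rw [hT2d]
                simp only [Finset.mem_filter, Finset.mem_univ, true_and]
                exact ⟨h1, h⟩
              have hle : t ≤ w := by rw [htd]; exact T2.min'_le w hwT
              have : t.val ≤ w.val := hle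
              omega
          set p : Fin n := ⟨t.val - 1, by have := t.isLt; omega⟩ with hpd
          have hpv : p.val = t.val - 1 := by rw [hpd]
          have hpj : j.val ≤ p.val := by omega
          have hap : a p = 0 := by
            rcases Nat.lt_or_ge j.val p.val with h | h
            · exact htmin p h (by omega)
            · have : p = j := Fin.ext (by omega)
              rw [this]; exact haj
          have hlvp : lv a p = 0 := by
            apply lv_eq_zero_of
            intro x hx
            rcases Nat.lt_or_ge j.val x.val with h | h
            · exact htmin x h (by omega)
            · rcases Nat.lt_or_ge x.val j.val with h' | h'
              · rw [hmin x h']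
                apply canon_zero
                intro hc
                have h1 := hc.1
                have h2 := hcj.1
                omega
              · have : x = j := Fin.ext (by omega)
                rw [this]; exact haj
          have hrvp : rv a p = 1 := by
            apply rv_eq_one_of
            · have := t.isLt; omega
            · intro x hx
              have : x = t := Fin.ext (by omega)
              rw [this]; exact htmem.2
          set b := move (pathG n) p a with hbd
          have hbp : b p = 1 := by
            rw [hbd, move_eval, hap, hlvp, hrvp]; decide
          have hbne : ∀ x : Fin n, x ≠ p → b x = a x := by
            intro x hx; rw [hbd]; exact move_ne a hx
          obtain ⟨t', ht'1, ht'2, ht'3⟩ := run_right_end a t htmem.2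
          have hpt' : p.val < t'.val := by omega
          have hnept : t' ≠ p := by intro h; rw [h] at hpt'; omega
          have hbt' : b t' = 1 := by rw [hbne t' hnept]; exact ht'2 t' ht'1 (le_refl _)
          have hlvb : lv b t' = 1 := by
            apply lv_eq_one_of
            · omega
            · intro x hx
              by_cases hxp : x = p
              · rw [hxp]; exact hbp
              · rw [hbne x hxp]
                refine ht'2 x ?_ (by omega)
                have hxv : x.val ≠ p.val := fun hc => hxp (Fin.ext hc)
                omega
          have hrvb : rv b t' = 0 := by
            apply rv_eq_zero_of
            intro x hx
            have hxp : x ≠ p := by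
              intro h; rw [h] at hx; omega
            rw [hbne x hxp]
            exact ht'3 x hx
          set c2 := move (pathG n) t' b with hc2d
          have hc2t' : c2 t' = 0 := by
            rw [hc2d, move_eval, hbt', hlvb, hrvb]; decide
          have hc2ne : ∀ x : Fin n, x ≠ t' → c2 x = b x := by
            intro x hx; rw [hc2d]; exact move_ne b hx
          have hc2p : c2 p = 1 := by rw [hc2ne p (fun h => hnept h.symm)]; exact hbp
          have hat' : a t' = 1 := ht'2 t' ht'1 (le_refl _)
          have hMd : M c2 < M a := by
            apply M_swap p t' hpt' hap hc2p hat' hc2t'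
            intro x h1 h2
            rw [hc2ne x h2, hbne x h1]
          have hkc : kcount c2 = kcount a := by
            rw [hc2d, kcount_move, hbd, kcount_move]
          have hstep : reederEquiv (pathG n) a c2 :=
            Relation.ReflTransGen.tail (Relation.ReflTransGen.single ⟨p, hbd⟩) ⟨t', hc2d⟩
          have hrec := ih c2 (by omega)
          rw [hkc, ← hk] at hrec
          exact Relation.ReflTransGen.trans hstep hrec
        · -- B-ii : no ones to the right: contradiction
          have hnone : ∀ t : Fin n, j.val < t.val → a t = 0 := by
            intro t ht
            rcases zmod2 (a t) with h | h
            · exact h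
            · exact absurd ⟨t, ht, h⟩ hex
          exact absurd (too_few_starts j (by rw [← hk]; exact hcj.2) hcj.1 haj
            (by rw [← hk]; exact hmin) hnone) (fun h => h)
      · -- Case A : a j = 1, canon k j = 0
        have hcj : canon k j = 0 := by
          rcases zmod2 (canon k j) with h | h
          · exact h
          · exact absurd (haj.trans h.symm) hjmem
        have hcj' : ¬ (j.val % 2 = 0 ∧ j.val < 2*k - 1) := by
          intro hc
          have h1 := (canon_eq_one_iff k j).mpr hc
          rw [hcj] at h1
          exact absurd h1 (by decide)
        by_cases hxex : ∃ x : Fin n, x.val + 1 = j.val ∧ a x = 1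
        · -- A-i : run of length ≥ 2; shrink from the right
          obtain ⟨x0, hx01, hx02⟩ := hxex
          obtain ⟨t', ht'1, ht'2, ht'3⟩ := run_right_end a j haj
          have hlv : lv a t' = 1 := by
            apply lv_eq_one_of
            · omega
            · intro x hx
              by_cases hxj : x.val < j.val
              · have : x = x0 := Fin.ext (by omega)
                rw [this]; exact hx02
              · exact ht'2 x (by omega) (by omega)
          have hrv : rv a t' = 0 := rv_eq_zero_of ht'3
          have hat' : a t' = 1 := ht'2 t' ht'1 (le_refl _)
          set b := move (pathG n) t' a with hbd
          have hbt : b t' = 0 := by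
            rw [hbd, move_eval, hat', hlv, hrv]; decide
          have hMd : M b < M a := by
            apply M_erase t' hat' hbt (by omega)
            intro x hx; rw [hbd]; exact move_ne a hx
          have hkc : kcount b = kcount a := by rw [hbd, kcount_move]
          have hstep : reederEquiv (pathG n) a b :=
            Relation.ReflTransGen.single ⟨t', hbd⟩
          have hrec := ih b (by omega)
          rw [hkc, ← hk] at hrec
          exact Relation.ReflTransGen.trans hstep hrec
        · -- A-ii : j is a start at position ≥ 2k-1: contradiction
          have hstart : isStart a j := by
            refine ⟨haj, ?_⟩
            rcases Nat.eq_zero_or_pos j.val with h0 | h0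
            · exact Or.inl h0
            · refine Or.inr fun x hx => ?_
              rcases zmod2 (a x) with h | h
              · exact h
              · exact absurd ⟨x, hx, h⟩ hxex
          have hjge : 2*k - 1 ≤ j.val := by
            by_contra hc
            push_neg at hc
            have hodd : ¬ (j.val % 2 = 0) := fun h => hcj' ⟨h, by omega⟩
            have hjpos : 0 < j.val := by omega
            set x : Fin n := ⟨j.val - 1, by have := j.isLt; omega⟩ with hxd
            have hxv : x.val = j.val - 1 := by rw [hxd]
            have hax : a x = canon k x := hmin x (by omega)
            have hcx : canon k x = 1 := (canon_eq_one_iff k x).mpr ⟨by omega, by omega⟩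
            have hax1 : a x = 1 := hax.trans hcx
            exact absurd ⟨x, by omega, hax1⟩ hxex
          exact absurd (too_many_starts j (by rw [← hk]; exact hjge) hstart
            (by rw [← hk]; exact hmin)) (fun h => h)

lemma reduce (a : Fin n → ZMod 2) : reederEquiv (pathG n) a (canon (kcount a)) :=
  reduce_aux (M a + 1) a (by omega)

end Reeder

/-- For the path graph `A_n`, two labelings are equivalent under the moves iff their
supports have the same number of connected components. -/
theorem pathG_equiv_iff (n : ℕ) (a b : Fin n → ZMod 2) :
    reederEquiv (pathG n) a b ↔ numComponents (pathG n) a = numComponents (pathG n) b := by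
  constructor
  · intro h
    induction h with
    | refl => rfl
    | tail hs step ih =>
      obtain ⟨i, rfl⟩ := step
      rw [ih, Reeder.numComponents_eq, Reeder.numComponents_eq, Reeder.kcount_move]
  · intro h
    rw [Reeder.numComponents_eq, Reeder.numComponents_eq] at h
    have h1 := Reeder.reduce a
    have h2 := Reeder.reduce b
    rw [h] at h1
    exact Relation.ReflTransGen.trans h1 (Reeder.reederEquiv_symm _ h2)
end

section
/- The number of equivalence classes of labelings of the path graph A_n under Reeder's moves equals ⌈n/2⌉ + 1. -/
/-!
Pad a labeling `a` of `A_n` with a zero at both ends and record its jumps `a (k - 1) + a k`,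
`0 ≤ k ≤ n`. This identifies the labelings with the vectors of even Hamming weight in
`(ZMod 2)^(n+1)`, and turns the move `T_i` into the transposition of the jumps `i` and `i + 1`.
Adjacent transpositions generate the symmetric group, so two labelings are equivalent iff their
jump vectors have the same weight, and the classes are counted by the even numbers `≤ n + 1`.
-/

open Finset

theorem Quot.natCard_eq_natCard_range {α β : Type*} {r : α → α → Prop} (f : α → β)
    (hf : ∀ a b, r a b → f a = f b) (hconn : ∀ a b, f a = f b → Relation.EqvGen r a b) :
    Nat.card (Quot r) = Nat.card (Set.range f) := by
  refine Nat.card_congr (Equiv.ofBijective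
    (Quot.lift (Set.rangeFactorization f) fun a b h => Subtype.ext (hf a b h)) ⟨?_, ?_⟩)
  · rintro ⟨a⟩ ⟨b⟩ h
    exact Quot.eqvGen_sound (hconn a b (congrArg Subtype.val h))
  · rintro ⟨_, a, rfl⟩
    exact ⟨Quot.mk r a, rfl⟩

theorem Nat.card_setOf_even_le (N : ℕ) : Nat.card {w : ℕ | Even w ∧ w ≤ N} = N / 2 + 1 := by
  have hrange : {w : ℕ | Even w ∧ w ≤ N} = Set.range fun m : Fin (N / 2 + 1) => 2 * (m : ℕ) := by
    ext w
    simp only [Set.mem_ofPred_eq, Set.mem_range, Fin.exists_iff]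
    constructor
    · rintro ⟨⟨m, rfl⟩, hw⟩
      exact ⟨m, by omega, by omega⟩
    · rintro ⟨m, hm, rfl⟩
      exact ⟨even_two_mul m, by omega⟩
  rw [hrange, Nat.card_range_of_injective (fun i j h => Fin.ext (by simpa using h)), Nat.card_fin]

section hammingNorm

variable {ι : Type*} [Fintype ι]

theorem hammingNorm_comp_perm {β : Type*} [DecidableEq β] [Zero β] (x : ι → β)
    (σ : Equiv.Perm ι) : hammingNorm (x ∘ σ) = hammingNorm x :=
  Finset.card_equiv σ (by simp)

theorem ZMod.eq_of_eq_zero_iff_two : ∀ {c d : ZMod 2}, (c = 0 ↔ d = 0) → c = d := by decide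

theorem sum_eq_hammingNorm_zmod_two (x : ι → ZMod 2) : ∑ i, x i = hammingNorm x := by
  rw [hammingNorm, ← Finset.sum_boole]
  refine Finset.sum_congr rfl fun i _ => ?_
  exact ZMod.eq_of_eq_zero_iff_two (by split_ifs <;> simp_all)

theorem exists_perm_comp_eq_of_hammingNorm_eq {x y : ι → ZMod 2}
    (h : hammingNorm x = hammingNorm y) : ∃ σ : Equiv.Perm ι, x ∘ σ = y := by
  classical
  obtain ⟨σ, hσ⟩ := Equiv.Perm.exists_map_finset_eq _ _ h.symm
  refine ⟨σ, funext fun i => ?_⟩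
  refine ZMod.eq_of_eq_zero_iff_two (not_iff_not.mp ?_)
  simpa using (Finset.ext_iff.mp hσ (σ i)).symm

end hammingNorm

namespace ReederPath

variable {n : ℕ}

/-- `pad a (j + 1) = a j` for `j < n`, and `pad a j = 0` at `j = 0` and `j > n`: the labeling with
a zero vertex added at both ends of the path. -/
def pad (a : Fin n → ZMod 2) : ℕ → ZMod 2
  | 0 => 0
  | j + 1 => if h : j < n then a ⟨j, h⟩ else 0

def jumps (a : Fin n → ZMod 2) (k : Fin (n + 1)) : ZMod 2 :=
  pad a k + pad a (k + 1)

theorem pad_succ (a : Fin n → ZMod 2) (j : Fin n) : pad a (j + 1) = a j := by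
  simp [pad]

theorem sum_filter_val_add_one_eq_pad (a : Fin n → ZMod 2) (j : ℕ) :
    ∑ k ∈ univ.filter (fun k : Fin n => (k : ℕ) + 1 = j), a k = pad a j := by
  rcases j with _ | j
  · simp [pad]
  by_cases hj : j < n
  · rw [Finset.sum_eq_single_of_mem ⟨j, hj⟩ (by simp)
      (fun k hk hne => absurd (Fin.ext (by simpa using hk)) hne)]
    simp [pad, hj]
  · rw [Finset.sum_eq_zero fun k hk => absurd (by simpa using hk) (by omega)]
    simp [pad, hj]

theorem sum_neighborFinset_pathG (a : Fin n → ZMod 2) (i : Fin n) :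
    ∑ k ∈ (pathG n).neighborFinset i, a k = pad a i + pad a (i + 2) := by
  have hN : (pathG n).neighborFinset i =
      univ.filter (fun k : Fin n => (k : ℕ) + 1 = i) ∪
        univ.filter (fun k : Fin n => (k : ℕ) + 1 = i + 2) := by
    ext k
    rw [SimpleGraph.mem_neighborFinset]
    simp only [pathG, Finset.mem_union, Finset.mem_filter_univ]
    omega
  rw [hN, Finset.sum_union (Finset.disjoint_filter.mpr fun k _ h => by omega),
    sum_filter_val_add_one_eq_pad, sum_filter_val_add_one_eq_pad]

theorem pad_move (a : Fin n → ZMod 2) (i : Fin n) :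
    pad (move (pathG n) i a) =
      Function.update (pad a) (i + 1) (pad a i + pad a (i + 1) + pad a (i + 2)) := by
  funext j
  rcases j with _ | j
  · simp [pad]
  by_cases hj : j < n
  · obtain ⟨j, rfl⟩ : ∃ j' : Fin n, (j' : ℕ) = j := ⟨⟨j, hj⟩, rfl⟩
    rw [pad_succ, Function.update_apply, move]
    by_cases h : j = i
    · subst h
      rw [if_pos rfl, sum_neighborFinset_pathG, if_pos rfl, pad_succ]
      ring
    · simp [h, Fin.val_inj, pad_succ]
  · have hji : j ≠ i := by omega
    simp [pad, hj, hji]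

theorem jumps_move (a : Fin n → ZMod 2) (i : Fin n) :
    jumps (move (pathG n) i a) = jumps a ∘ Equiv.swap i.castSucc i.succ := by
  funext k
  simp only [jumps, pad_move, Function.comp_apply, Function.update_apply]
  rcases eq_or_ne k i.castSucc with rfl | h1
  · rw [Equiv.swap_apply_left, Fin.val_castSucc, Fin.val_succ]
    grind
  rcases eq_or_ne k i.succ with rfl | h2
  · rw [Equiv.swap_apply_right, Fin.val_castSucc, Fin.val_succ]
    grind
  rw [Equiv.swap_apply_of_ne_of_ne h1 h2]
  simp only [ne_eq, Fin.ext_iff, Fin.val_castSucc, Fin.val_succ] at h1 h2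
  rw [if_neg (by omega), if_neg (by omega)]

theorem jumps_injective : Function.Injective (jumps (n := n)) := by
  intro a b h
  have hpad : ∀ j ≤ n, pad a j = pad b j := by
    intro j hj
    induction j with
    | zero => rfl
    | succ j ih =>
      have hd := congrFun h ⟨j, by omega⟩
      simp only [jumps, ih (by omega)] at hd
      exact add_left_cancel hd
  funext j
  rw [← pad_succ a j, ← pad_succ b j, hpad _ j.isLt]

theorem sum_jumps (a : Fin n → ZMod 2) : ∑ k, jumps a k = 0 := by
  have hsub : ∀ k, pad a k + pad a (k + 1) = pad a (k + 1) - pad a k := fun k => by grind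
  simp only [jumps, hsub]
  rw [Fin.sum_univ_eq_sum_range (fun k => pad a (k + 1) - pad a k), Finset.sum_range_sub]
  simp [pad]

theorem jumps_add (a b : Fin n → ZMod 2) : jumps (a + b) = jumps a + jumps b := by
  have hpad : pad (a + b) = pad a + pad b := by
    funext j
    rcases j with _ | j
    · simp [pad]
    · by_cases hj : j < n <;> simp [pad, hj]
  funext k
  simp only [jumps, hpad, Pi.add_apply]
  ring

def jumpsLinearMap : (Fin n → ZMod 2) →ₗ[ZMod 2] (Fin (n + 1) → ZMod 2) :=
  AddMonoidHom.toZModLinearMap 2 (AddMonoidHom.mk' jumps jumps_add)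

/-- `jumps` is an injective linear map into the hyperplane `∑ k, x k = 0`, which has dimension `n`,
so it is onto that hyperplane. -/
theorem exists_jumps_eq (x : Fin (n + 1) → ZMod 2) (hx : ∑ k, x k = 0) : ∃ a, jumps a = x := by
  set sumₗ := Fintype.linearCombination (ZMod 2) fun _ : Fin (n + 1) => (1 : ZMod 2)
  have hsum : ∀ y, sumₗ y = ∑ k, y k := fun y => by simp [sumₗ, Fintype.linearCombination_apply]
  have hle : LinearMap.range jumpsLinearMap ≤ LinearMap.ker sumₗ := by
    rintro _ ⟨a, rfl⟩
    exact (hsum _).trans (sum_jumps a)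
  have hsurj : LinearMap.range sumₗ = ⊤ :=
    LinearMap.range_eq_top.mpr fun c => ⟨Pi.single 0 c, by simp [hsum]⟩
  have hker : Module.finrank (ZMod 2) (LinearMap.ker sumₗ) = n := by
    have := LinearMap.finrank_range_add_finrank_ker sumₗ
    rw [hsurj, finrank_top, Module.finrank_self, Module.finrank_fin_fun] at this
    omega
  have hrange : Module.finrank (ZMod 2) (LinearMap.range (jumpsLinearMap (n := n))) = n := by
    rw [LinearMap.finrank_range_of_inj (f := jumpsLinearMap) jumps_injective,
      Module.finrank_fin_fun]
  have heq := Submodule.eq_of_le_of_finrank_eq hle (hrange.trans hker.symm)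
  have hxk : x ∈ LinearMap.ker sumₗ := (hsum x).trans hx
  rwa [← heq] at hxk

theorem exists_eqvGen_jumps_eq_comp (σ : Equiv.Perm (Fin (n + 1))) (a : Fin n → ZMod 2) :
    ∃ b, Relation.EqvGen (reederStep (pathG n)) a b ∧ jumps b = jumps a ∘ σ := by
  have hσ : σ ∈ Submonoid.closure (Set.range fun i : Fin n ↦ Equiv.swap i.castSucc i.succ) := by
    rw [Equiv.Perm.mclosure_swap_castSucc_succ]
    exact Submonoid.mem_top σ
  induction hσ using Submonoid.closure_induction generalizing a with
  | mem _ hτ =>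
    obtain ⟨i, rfl⟩ := hτ
    exact ⟨move (pathG n) i a, .rel _ _ ⟨i, rfl⟩, jumps_move a i⟩
  | one => exact ⟨a, .refl a, rfl⟩
  | mul τ ρ _ _ ihτ ihρ =>
    obtain ⟨b, hab, hb⟩ := ihτ a
    obtain ⟨c, hbc, hc⟩ := ihρ b
    exact ⟨c, hab.trans _ _ _ hbc, by rw [hc, hb, Equiv.Perm.coe_mul]; rfl⟩

theorem hammingNorm_jumps_eq_of_reederStep {a b : Fin n → ZMod 2}
    (h : reederStep (pathG n) a b) : hammingNorm (jumps a) = hammingNorm (jumps b) := by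
  obtain ⟨i, rfl⟩ := h
  rw [jumps_move, hammingNorm_comp_perm]

theorem eqvGen_of_hammingNorm_jumps_eq {a b : Fin n → ZMod 2}
    (h : hammingNorm (jumps a) = hammingNorm (jumps b)) :
    Relation.EqvGen (reederStep (pathG n)) a b := by
  obtain ⟨σ, hσ⟩ := exists_perm_comp_eq_of_hammingNorm_eq h
  obtain ⟨c, hac, hc⟩ := exists_eqvGen_jumps_eq_comp σ a
  rwa [jumps_injective (hc.trans hσ)] at hac

theorem range_hammingNorm_jumps :
    Set.range (fun a : Fin n → ZMod 2 => hammingNorm (jumps a)) = {w | Even w ∧ w ≤ n + 1} := by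
  ext w
  constructor
  · rintro ⟨a, rfl⟩
    refine ⟨?_, ?_⟩
    · rw [← ZMod.natCast_eq_zero_iff_even, ← sum_eq_hammingNorm_zmod_two, sum_jumps]
    · simpa using hammingNorm_le_card_fintype (x := jumps a)
  · rintro ⟨hw, hwn⟩
    set x : Fin (n + 1) → ZMod 2 := fun k => if (k : ℕ) < w then 1 else 0
    have hx : hammingNorm x = w := by
      simp [x, hammingNorm, Fin.card_filter_val_lt, hwn]
    obtain ⟨a, ha⟩ := exists_jumps_eq x (by
      rw [sum_eq_hammingNorm_zmod_two, hx, ZMod.natCast_eq_zero_iff_even]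
      exact hw)
    exact ⟨a, (congrArg hammingNorm ha).trans hx⟩

end ReederPath

/-- The number of equivalence classes of labelings of the path graph `A_n` under
Reeder's moves equals `⌈n/2⌉ + 1`. -/
theorem pathG_card_classes (n : ℕ) :
    Nat.card (Quot (reederStep (pathG n))) = (n + 1) / 2 + 1 := by
  rw [Quot.natCard_eq_natCard_range (fun a => hammingNorm (ReederPath.jumps a))
      (fun _ _ => ReederPath.hammingNorm_jumps_eq_of_reederStep)
      (fun _ _ => ReederPath.eqvGen_of_hammingNorm_jumps_eq),
    ReederPath.range_hammingNorm_jumps, Nat.card_setOf_even_le]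
end

section
/- The number of equivalence classes of labelings of the cycle graph on n+1 vertices under Reeder's moves is k+2 if n = 2k and k+4 if n = 2k+1. -/
/-- The cycle graph on `n+1` vertices `0,…,n`. -/
def cycG (n : ℕ) : SimpleGraph (Fin (n + 1)) where
  Adj i j := i ≠ j ∧ ((i.val + 1) % (n + 1) = j.val ∨ (j.val + 1) % (n + 1) = i.val)
  symm := by constructor; intro i j h; exact ⟨Ne.symm h.1, h.2.symm⟩
  loopless := by constructor; intro i h; exact h.1 rfl

instance (n : ℕ) : DecidableRel (cycG n).Adj :=
  fun i j => inferInstanceAs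
    (Decidable (i ≠ j ∧ ((i.val + 1) % (n + 1) = j.val ∨ (j.val + 1) % (n + 1) = i.val)))

/-! Write `diff a j = a j + a (j + 1)` for the label of the edge `{j, j + 1}`. The move `T_i`
swaps `diff a (i - 1)` and `diff a i`, and a labeling is determined by `diff a` together with
`a 0`. So the number `w` of edges labelled `1`, which is even, is invariant; and since adjacent
transpositions generate the symmetric group, the moves `T_i` with `i ≠ 0` realize every
permutation of `diff a` while fixing `a 0`. If `0 < w < n + 1`, a single `T_0` applied at an
arrangement with `diff a n ≠ diff a 0` flips `a 0`, so all labelings of weight `w` are equivalent.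
If `diff a` is constant (`w = 0`, or `w = n + 1` for odd `n`), every move fixes `a`. Hence the
classes are the even weights `w ≤ n + 1`, the extreme ones counted twice. -/

open Finset

theorem natCard_quot_eq_natCard_range {α β : Type*} {r : α → α → Prop} (f : α → β)
    (hf : ∀ a b, r a b → f a = f b) (hcomplete : ∀ a b, f a = f b → Relation.EqvGen r a b) :
    Nat.card (Quot r) = Nat.card (Set.range f) := by
  have hinj : Function.Injective (Quot.lift f hf) := by
    rintro ⟨a⟩ ⟨b⟩ h
    exact Quot.eqvGen_sound (hcomplete a b h)
  rw [← Set.range_quot_lift hf]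
  exact Nat.card_congr (Equiv.ofInjective _ hinj)

theorem exists_equiv_comp_eq_of_card_fiber_eq {α β γ : Type*} [Fintype α] [Fintype β]
    [DecidableEq γ] {f : α → γ} {g : β → γ}
    (h : ∀ c, Fintype.card {a // f a = c} = Fintype.card {b // g b = c}) :
    ∃ e : α ≃ β, g ∘ e = f :=
  ⟨Equiv.ofFiberEquiv fun c => Fintype.equivOfCardEq (h c),
    funext (Equiv.ofFiberEquiv_map _)⟩

theorem card_filter_even_range (m : ℕ) : #{k ∈ range m | Even k} = (m + 1) / 2 := by
  induction m with
  | zero => rfl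
  | succ m ih =>
    rw [range_add_one, filter_insert]
    split_ifs
    · rw [card_insert_of_notMem (by simp), ih]
      grind
    · rw [ih]
      grind

theorem Fin.val_add_one_mod {n : ℕ} (k : Fin (n + 1)) :
    ((k : ℕ) + 1) % (n + 1) = if (k : ℕ) = n then (0 : ℕ) else (k : ℕ) + 1 := by
  split_ifs with h
  · rw [h, Nat.mod_self]
  · exact Nat.mod_eq_of_lt (by omega)

theorem Fin.add_one_ne_sub_one {n : ℕ} (hn : 2 ≤ n) (i : Fin (n + 1)) : i + 1 ≠ i - 1 := by
  simp only [ne_eq, Fin.ext_iff, Fin.val_add_one, Fin.coe_sub_one, Fin.val_last, Fin.val_zero]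
  have := i.isLt
  split_ifs <;> omega

theorem move_apply_of_ne {V : Type} [Fintype V] [DecidableEq V] (D : SimpleGraph V)
    [DecidableRel D.Adj] {i j : V} (a : V → ZMod 2) (h : j ≠ i) : move D i a j = a j :=
  if_neg h

namespace Reeder

variable {n : ℕ}

theorem cycG_adj_iff (hn : 2 ≤ n) (i j : Fin (n + 1)) :
    (cycG n).Adj i j ↔ j = i + 1 ∨ j = i - 1 := by
  simp only [cycG, ne_eq, Fin.ext_iff, Fin.val_add_one, Fin.val_add_one_mod, Fin.val_last,
    Fin.coe_sub_one, Fin.val_zero]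
  have := i.isLt
  have := j.isLt
  split_ifs <;> omega

theorem sum_neighborFinset_cycG {M : Type*} [AddCommMonoid M] (hn : 2 ≤ n) (i : Fin (n + 1))
    (f : Fin (n + 1) → M) :
    ∑ k ∈ (cycG n).neighborFinset i, f k = f (i + 1) + f (i - 1) := by
  have : (cycG n).neighborFinset i = {i + 1, i - 1} := by
    ext j
    simp [cycG_adj_iff hn]
  rw [this, sum_pair (Fin.add_one_ne_sub_one hn i)]

def diff (a : Fin (n + 1) → ZMod 2) (j : Fin (n + 1)) : ZMod 2 := a j + a (j + 1)

theorem move_apply_self (hn : 2 ≤ n) (i : Fin (n + 1)) (a : Fin (n + 1) → ZMod 2) :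
    move (cycG n) i a i = a i + (diff a (i - 1) + diff a i) := by
  simp only [move, ↓reduceIte, sum_neighborFinset_cycG hn, diff, sub_add_cancel]
  grind

theorem diff_move (hn : 2 ≤ n) (i : Fin (n + 1)) (a : Fin (n + 1) → ZMod 2) :
    diff (move (cycG n) i a) = diff a ∘ Equiv.swap (i - 1) i := by
  have : NeZero n := ⟨by omega⟩
  have hone : (1 : Fin (n + 1)) ≠ 0 := Fin.one_pos'.ne'
  have hsucc : i + 1 ≠ i := by simp [hone]
  have hpred : i - 1 ≠ i := by simp [hone]
  funext j
  simp only [Function.comp_apply]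
  rcases eq_or_ne j i with rfl | hji
  · rw [Equiv.swap_apply_right, diff, move_apply_self hn, move_apply_of_ne _ _ hsucc, diff, diff,
      sub_add_cancel]
    grind
  rcases eq_or_ne j (i - 1) with rfl | hj
  · rw [Equiv.swap_apply_left, diff, sub_add_cancel, move_apply_self hn,
      move_apply_of_ne _ _ hpred, diff, diff, sub_add_cancel]
    grind
  · have hj' : j + 1 ≠ i := fun h => hj (eq_sub_of_add_eq h)
    rw [Equiv.swap_apply_of_ne_of_ne hj hji, diff, diff, move_apply_of_ne _ _ hji,
      move_apply_of_ne _ _ hj']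

def weight (a : Fin (n + 1) → ZMod 2) : ℕ := Fintype.card {j // diff a j = 1}

theorem weight_le (a : Fin (n + 1) → ZMod 2) : weight a ≤ n + 1 :=
  (Fintype.card_subtype_le _).trans_eq (Fintype.card_fin _)

theorem weight_eq_of_diff_eq_comp {a b : Fin (n + 1) → ZMod 2} {σ : Equiv.Perm (Fin (n + 1))}
    (h : diff b = diff a ∘ σ) : weight b = weight a := by
  rw [weight, weight, h]
  exact Fintype.card_congr (σ.subtypeEquiv fun _ => Iff.rfl)

theorem weight_move (hn : 2 ≤ n) (i : Fin (n + 1)) (a : Fin (n + 1) → ZMod 2) :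
    weight (move (cycG n) i a) = weight a :=
  weight_eq_of_diff_eq_comp (diff_move hn i a)

theorem eq_of_diff_eq {a b : Fin (n + 1) → ZMod 2} (h : diff a = diff b) (h0 : a 0 = b 0) :
    a = b := by
  funext j
  induction j using Fin.induction with
  | zero => exact h0
  | succ j ih =>
    have := congrFun h j.castSucc
    rw [diff, diff, Fin.coeSucc_eq_succ, ih] at this
    exact add_left_cancel this

theorem even_weight (a : Fin (n + 1) → ZMod 2) : Even (weight a) := by
  have hsum : ∑ j, diff a j = 0 := by
    have hshift := Equiv.sum_comp (Equiv.addRight (1 : Fin (n + 1))) a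
    simp only [Equiv.coe_addRight] at hshift
    simp only [diff, sum_add_distrib, hshift, CharTwo.add_self_eq_zero]
  have hboole (x : ZMod 2) : (if x = 1 then 1 else 0) = x := by fin_cases x <;> rfl
  rw [← ZMod.natCast_eq_zero_iff_even, weight, Fintype.card_subtype, ← sum_boole,
    sum_congr rfl fun j _ => hboole (diff a j), hsum]

theorem diff_eq_zero_of_weight_eq_zero {a : Fin (n + 1) → ZMod 2} (h : weight a = 0) :
    diff a = 0 := by
  rw [weight, Fintype.card_eq_zero_iff, isEmpty_subtype] at h
  funext j
  rw [Pi.zero_apply]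
  have hj := h j
  revert hj
  generalize diff a j = x
  revert x
  decide

theorem diff_eq_one_of_weight_eq {a : Fin (n + 1) → ZMod 2} (h : weight a = n + 1) :
    diff a = 1 := by
  funext j
  rw [Pi.one_apply]
  by_contra hj
  have := Fintype.card_subtype_lt (p := fun k => diff a k = 1) hj
  rw [Fintype.card_fin] at this
  exact this.ne h

theorem move_eq_self_of_diff_eq_const (hn : 2 ≤ n) {a : Fin (n + 1) → ZMod 2} {c : ZMod 2}
    (h : diff a = fun _ => c) (i : Fin (n + 1)) : move (cycG n) i a = a := by
  funext j
  rcases eq_or_ne j i with rfl | hji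
  · rw [move_apply_self hn, h, CharTwo.add_self_eq_zero, add_zero]
  · exact move_apply_of_ne _ _ hji

theorem exists_eqvGen_diff_eq_comp (hn : 2 ≤ n) (σ : Equiv.Perm (Fin (n + 1)))
    (a : Fin (n + 1) → ZMod 2) :
    ∃ b, Relation.EqvGen (reederStep (cycG n)) a b ∧ b 0 = a 0 ∧ diff b = diff a ∘ σ := by
  have hσ :
      σ ∈ Submonoid.closure (Set.range fun t : Fin n ↦ Equiv.swap t.castSucc t.succ) := by
    rw [Equiv.Perm.mclosure_swap_castSucc_succ]
    exact Submonoid.mem_top σ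
  induction hσ using Submonoid.closure_induction generalizing a with
  | mem _ hswap =>
    obtain ⟨t, rfl⟩ := hswap
    refine ⟨move (cycG n) t.succ a, .rel _ _ ⟨_, rfl⟩,
      move_apply_of_ne _ _ (Fin.succ_ne_zero t).symm, ?_⟩
    beta_reduce
    rw [diff_move hn, ← Fin.coeSucc_eq_succ, add_sub_cancel_right]
  | one => exact ⟨a, .refl a, rfl, rfl⟩
  | mul σ τ _ _ ihσ ihτ =>
    obtain ⟨b, hab, hb0, hb⟩ := ihσ a
    obtain ⟨c, hbc, hc0, hc⟩ := ihτ b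
    exact ⟨c, hab.trans _ _ _ hbc, hc0.trans hb0, by rw [hc, hb, Equiv.Perm.coe_mul]; rfl⟩

theorem card_diff_eq_zero (a : Fin (n + 1) → ZMod 2) :
    Fintype.card {j // diff a j = 0} = n + 1 - weight a := by
  have hcompl : ∀ x : ZMod 2, x = 0 ↔ ¬x = 1 := by decide
  calc Fintype.card {j // diff a j = 0}
      = Fintype.card {j // ¬diff a j = 1} :=
        Fintype.card_congr (Equiv.subtypeEquivRight fun j => hcompl (diff a j))
    _ = n + 1 - weight a := by rw [Fintype.card_subtype_compl, Fintype.card_fin, weight]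

theorem exists_perm_diff_eq_comp_of_weight_eq {a b : Fin (n + 1) → ZMod 2}
    (h : weight a = weight b) : ∃ σ : Equiv.Perm (Fin (n + 1)), diff b = diff a ∘ σ := by
  refine (exists_equiv_comp_eq_of_card_fiber_eq fun c => ?_).imp fun σ hσ => hσ.symm
  fin_cases c
  · show Fintype.card {j // diff b j = 0} = Fintype.card {j // diff a j = 0}
    rw [card_diff_eq_zero, card_diff_eq_zero, h]
  · exact h.symm

def stair (w : ℕ) (c : ZMod 2) : Fin (n + 1) → ZMod 2 :=
  fun j => ((min (j : ℕ) w : ℕ) : ZMod 2) + c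

theorem diff_stair {w : ℕ} (hw : Even w) (hwn : w ≤ n + 1) (c : ZMod 2) :
    diff (stair w c : Fin (n + 1) → ZMod 2) =
      fun j : Fin (n + 1) => if (j : ℕ) < w then (1 : ZMod 2) else 0 := by
  funext j
  simp only [diff, stair, Fin.val_add_one, Fin.ext_iff, Fin.val_last]
  have := j.isLt
  split_ifs with hlast hlt hlt
  · have hodd : ((n : ℕ) : ZMod 2) = 1 := by
      rw [ZMod.natCast_eq_one_iff_odd, ← Nat.not_even_iff_odd, ← Nat.even_add_one]
      rwa [show w = n + 1 by omega] at hw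
    rw [min_eq_left hlt.le, Nat.zero_min, hlast, hodd]
    grind
  · rw [min_eq_right (by omega), Nat.zero_min, ZMod.natCast_eq_zero_iff_even.mpr hw]
    grind
  · rw [min_eq_left hlt.le, min_eq_left (by omega)]
    push_cast
    grind
  · rw [min_eq_right (by omega), min_eq_right (by omega)]
    grind

theorem weight_stair {w : ℕ} (hw : Even w) (hwn : w ≤ n + 1) (c : ZMod 2) :
    weight (stair w c : Fin (n + 1) → ZMod 2) = w := by
  simp [weight, diff_stair hw hwn, Fintype.card_subtype, Fin.card_filter_val_lt, hwn]

theorem stair_zero (w : ℕ) (c : ZMod 2) : (stair w c : Fin (n + 1) → ZMod 2) 0 = c := by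
  simp [stair]

theorem exists_eqvGen_apply_zero_eq (hn : 2 ≤ n) {a : Fin (n + 1) → ZMod 2}
    (h0 : 0 < weight a) (h1 : weight a < n + 1) (c : ZMod 2) :
    ∃ b, Relation.EqvGen (reederStep (cycG n)) a b ∧ b 0 = c ∧ weight b = weight a := by
  by_cases hc : a 0 = c
  · exact ⟨a, .refl a, hc, rfl⟩
  have hw := weight_stair (n := n) (even_weight a) h1.le 0
  obtain ⟨σ, hσ⟩ := exists_perm_diff_eq_comp_of_weight_eq hw.symm
  obtain ⟨b, hab, hb0, hb⟩ := exists_eqvGen_diff_eq_comp hn σ a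
  refine ⟨move (cycG n) 0 b, hab.trans _ _ _ (.rel _ _ ⟨0, rfl⟩), ?_, ?_⟩
  · have hlast : ((0 - 1 : Fin (n + 1)) : ℕ) = n := by simp
    have hflip : ∀ x y : ZMod 2, x ≠ y → x + (0 + 1) = y := by decide
    rw [move_apply_self hn, hb, ← hσ, diff_stair (even_weight a) h1.le, hb0]
    have h0' : ((0 : Fin (n + 1)) : ℕ) < weight a := h0
    simp only [hlast, if_neg (by omega : ¬n < weight a), if_pos h0']
    exact hflip _ _ hc
  · rw [weight_move hn, weight_eq_of_diff_eq_comp hb]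

theorem eqvGen_of_weight_eq (hn : 2 ≤ n) {a b : Fin (n + 1) → ZMod 2} (h : weight a = weight b)
    (h0 : 0 < weight a) (h1 : weight a < n + 1) : Relation.EqvGen (reederStep (cycG n)) a b := by
  obtain ⟨a₁, haa₁, ha₁0, hw₁⟩ := exists_eqvGen_apply_zero_eq hn h0 h1 (b 0)
  obtain ⟨σ, hσ⟩ := exists_perm_diff_eq_comp_of_weight_eq (hw₁.trans h)
  obtain ⟨a₂, ha₁a₂, ha₂0, ha₂⟩ := exists_eqvGen_diff_eq_comp hn σ a₁
  obtain rfl : a₂ = b := eq_of_diff_eq (ha₂.trans hσ.symm) (ha₂0.trans ha₁0)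
  exact haa₁.trans _ _ _ ha₁a₂

theorem diff_eq_of_weight_eq_zero_or_eq {a : Fin (n + 1) → ZMod 2}
    (h : weight a = 0 ∨ weight a = n + 1) : diff a = fun _ => if weight a = 0 then 0 else 1 := by
  rcases h with h | h
  · rw [if_pos h]
    exact diff_eq_zero_of_weight_eq_zero h
  · rw [if_neg (by omega)]
    exact diff_eq_one_of_weight_eq h

def classInvariant (a : Fin (n + 1) → ZMod 2) : ℕ × ZMod 2 :=
  (weight a, if weight a = 0 ∨ weight a = n + 1 then a 0 else 0)

theorem classInvariant_move (hn : 2 ≤ n) (i : Fin (n + 1)) (a : Fin (n + 1) → ZMod 2) :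
    classInvariant (move (cycG n) i a) = classInvariant a := by
  by_cases hconst : weight a = 0 ∨ weight a = n + 1
  · rw [move_eq_self_of_diff_eq_const hn (diff_eq_of_weight_eq_zero_or_eq hconst)]
  · simp only [classInvariant, weight_move hn, if_neg hconst]

theorem eqvGen_of_classInvariant_eq (hn : 2 ≤ n) {a b : Fin (n + 1) → ZMod 2}
    (h : classInvariant a = classInvariant b) : Relation.EqvGen (reederStep (cycG n)) a b := by
  simp only [classInvariant, Prod.mk.injEq] at h
  obtain ⟨hw, h0⟩ := h
  by_cases hconst : weight a = 0 ∨ weight a = n + 1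
  · rw [if_pos hconst, if_pos (hw ▸ hconst)] at h0
    have hdiff : diff a = diff b := by
      rw [diff_eq_of_weight_eq_zero_or_eq hconst, diff_eq_of_weight_eq_zero_or_eq (hw ▸ hconst),
        hw]
    rw [eq_of_diff_eq hdiff h0]
    exact .refl b
  · have := weight_le a
    exact eqvGen_of_weight_eq hn hw (by omega) (by omega)

theorem classInvariant_stair {w : ℕ} (hw : Even w) (hwn : w ≤ n + 1) (c : ZMod 2) :
    classInvariant (stair w c : Fin (n + 1) → ZMod 2) =
      (w, if w = 0 ∨ w = n + 1 then c else 0) := by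
  simp only [classInvariant, weight_stair hw hwn, stair_zero]

theorem range_classInvariant :
    Set.range (classInvariant (n := n)) =
      ↑({w ∈ range (n + 2) | Even w} ×ˢ {0} ∪
        {w ∈ ({0, n + 1} : Finset ℕ) | Even w} ×ˢ {1} : Finset (ℕ × ZMod 2)) := by
  ext ⟨w, c⟩
  simp only [Set.mem_range, coe_union, coe_product, Set.mem_union, Set.mem_prod, mem_coe,
    mem_filter, mem_range, mem_insert, mem_singleton]
  constructor
  · rintro ⟨a, ha⟩
    simp only [classInvariant, Prod.mk.injEq] at ha
    obtain ⟨rfl, rfl⟩ := ha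
    have hle := weight_le a
    have hev := even_weight a
    split_ifs with hconst
    · generalize a 0 = x
      fin_cases x
      · exact .inl ⟨⟨by omega, hev⟩, rfl⟩
      · exact .inr ⟨⟨hconst, hev⟩, rfl⟩
    · exact .inl ⟨⟨by omega, hev⟩, rfl⟩
  · rintro (⟨⟨hw, hev⟩, rfl⟩ | ⟨⟨hw, hev⟩, rfl⟩)
    · exact ⟨stair w 0, by rw [classInvariant_stair hev (by omega), ite_self]⟩
    · exact ⟨stair w 1, by rw [classInvariant_stair hev (by omega), if_pos hw]⟩

theorem natCard_quot_reederStep_cycG (hn : 2 ≤ n) :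
    Nat.card (Quot (reederStep (cycG n))) = (n + 3) / 2 + if Even (n + 1) then 2 else 1 := by
  have hinv (a b : Fin (n + 1) → ZMod 2) (hab : reederStep (cycG n) a b) :
      classInvariant a = classInvariant b := by
    obtain ⟨i, rfl⟩ := hab
    exact (classInvariant_move hn i a).symm
  have hdisj : Disjoint ({w ∈ range (n + 2) | Even w} ×ˢ ({0} : Finset (ZMod 2)))
      ({w ∈ ({0, n + 1} : Finset ℕ) | Even w} ×ˢ {1}) :=
    disjoint_product.mpr (.inr (disjoint_singleton.mpr (by decide)))
  rw [natCard_quot_eq_natCard_range classInvariant hinv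
      (fun _ _ => eqvGen_of_classInvariant_eq hn), range_classInvariant, Nat.card_coe_set_eq,
    Set.ncard_coe_finset, card_union_of_disjoint hdisj,
    card_product, card_product, card_singleton, card_singleton, mul_one, mul_one,
    card_filter_even_range, filter_insert, if_pos Even.zero, filter_singleton]
  split_ifs <;> simp

end Reeder

/-- The number of equivalence classes of labelings of the cycle graph on `n+1` vertices
under Reeder's moves is `k+2` if `n = 2k` and `k+4` if `n = 2k+1`. -/
theorem cycG_card_classes (n : ℕ) (hn : 2 ≤ n) :
    (∀ k : ℕ, n = 2 * k → Nat.card (Quot (reederStep (cycG n))) = k + 2) ∧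
    (∀ k : ℕ, n = 2 * k + 1 → Nat.card (Quot (reederStep (cycG n))) = k + 4) := by
  rw [Reeder.natCard_quot_reederStep_cycG hn]
  constructor
  · rintro k rfl
    rw [if_neg (Nat.not_even_iff_odd.mpr (odd_two_mul_add_one k))]
    omega
  · rintro k rfl
    rw [if_pos ⟨k + 1, by ring⟩]
    omega
end

section
/- On the cycle graph with n+1 vertices, every labeling that is not the all-ones labeling and (when n is odd) not an alternating labeling is equivalent to a labeling whose value at vertex 0 is 0. -/
/-! If the two neighbours of a vertex `i` carry different labels, the move at `i` flips `a i`.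
Flipping `a i` when `a (i - 2) = a i` gives `i - 1` differently labelled neighbours, so such a
vertex can be walked down to `0`, where the move then flips `a 0`. If there is no such vertex, the
labeling is 2-periodic around the cycle, hence constant or, on a cycle of even length,
alternating. -/

open Fin.CommRing Function

lemma zmod_two_eq_zero_or_eq_one : ∀ x : ZMod 2, x = 0 ∨ x = 1 := by decide

lemma zmod_two_add_eq_one_of_ne : ∀ {x y : ZMod 2}, x ≠ y → x + y = 1 := by decide

section Move

variable {V : Type} [Fintype V] [DecidableEq V] (D : SimpleGraph V) [DecidableRel D.Adj]

lemma move_eq_update (i : V) (a : V → ZMod 2) :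
    move D i a = update a i (a i + ∑ k ∈ D.neighborFinset i, a k) := by
  funext j
  by_cases hj : j = i <;> simp [move, hj]

lemma reederEquiv_move (i : V) (a : V → ZMod 2) : reederEquiv D a (move D i a) :=
  .single ⟨i, rfl⟩

end Move

section Cycle

variable {n : ℕ}

lemma Fin.one_ne_zero_of_two_le (hn : 2 ≤ n) : (1 : Fin (n + 1)) ≠ 0 := by
  rw [Ne, Fin.one_eq_zero_iff]; omega

lemma Fin.two_ne_zero_of_two_le (hn : 2 ≤ n) : (2 : Fin (n + 1)) ≠ 0 := by
  have : ¬ (n + 1) ∣ 2 := fun h => by have := Nat.le_of_dvd two_pos h; omega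
  exact_mod_cast mt Fin.natCast_eq_zero.mp this

lemma cycG_adj_iff (hn : 2 ≤ n) (i j : Fin (n + 1)) :
    (cycG n).Adj i j ↔ j = i + 1 ∨ j = i - 1 := by
  have hval : ∀ x : Fin (n + 1), (x + 1).val = (x.val + 1) % (n + 1) := fun x => by
    simp [Fin.val_add]
  rw [eq_sub_iff_add_eq]
  constructor
  · rintro ⟨-, h | h⟩
    · exact .inl (Fin.ext (by rw [hval]; exact h.symm))
    · exact .inr (Fin.ext (by rw [hval]; exact h))
  · have h1 := Fin.one_ne_zero_of_two_le hn
    rintro (rfl | rfl)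
    · exact ⟨fun h => h1 (by linear_combination -h), .inl (hval i).symm⟩
    · exact ⟨fun h => h1 (by linear_combination h), .inr (hval j).symm⟩

lemma cycG_neighborFinset (hn : 2 ≤ n) (i : Fin (n + 1)) :
    (cycG n).neighborFinset i = {i + 1, i - 1} := by
  ext j
  simp [cycG_adj_iff hn]

lemma cycG_move (hn : 2 ≤ n) (i : Fin (n + 1)) (a : Fin (n + 1) → ZMod 2) :
    move (cycG n) i a = update a i (a i + (a (i - 1) + a (i + 1))) := by
  have hne : i + 1 ≠ i - 1 := fun h => Fin.two_ne_zero_of_two_le hn (by linear_combination h)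
  rw [move_eq_update, cycG_neighborFinset hn, Finset.sum_pair hne, add_comm (a (i + 1))]

lemma cycG_move_apply_self_of_ne (hn : 2 ≤ n) {i : Fin (n + 1)} {a : Fin (n + 1) → ZMod 2}
    (h : a (i - 1) ≠ a (i + 1)) : move (cycG n) i a i = a i + 1 := by
  rw [cycG_move hn, update_self, zmod_two_add_eq_one_of_ne h]

lemma exists_reederEquiv_apply_zero_eq_zero_of_ne (hn : 2 ≤ n) (k : ℕ) (a : Fin (n + 1) → ZMod 2)
    (h : a ((k : Fin (n + 1)) - 1) ≠ a (k + 1)) :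
    ∃ b, reederEquiv (cycG n) a b ∧ b 0 = 0 := by
  induction k generalizing a with
  | zero =>
    rcases zmod_two_eq_zero_or_eq_one (a 0) with h0 | h0
    · exact ⟨a, .refl, h0⟩
    · refine ⟨_, reederEquiv_move _ 0 a, ?_⟩
      rw [Nat.cast_zero] at h
      rw [cycG_move_apply_self_of_ne hn h, h0]
      rfl
  | succ k ih =>
    push_cast at h ⊢
    by_cases hk : a ((k : Fin (n + 1)) - 1) = a (k + 1)
    · have hne : (k : Fin (n + 1)) - 1 ≠ k + 1 :=
        fun h' => Fin.two_ne_zero_of_two_le hn (by linear_combination -h')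
      obtain ⟨b, hab, hb⟩ := ih (move (cycG n) (k + 1) a) <| by
        rw [move, if_neg hne, cycG_move_apply_self_of_ne hn h, hk]
        simp
      exact ⟨b, .head ⟨k + 1, rfl⟩ hab, hb⟩
    · exact ih a hk

lemma periodic_two_of_forall_eq {α : Type*} {a : Fin (n + 1) → α}
    (h : ∀ i, a (i - 1) = a (i + 1)) : Periodic a 2 := fun i => by
  simpa [add_assoc, one_add_one_eq_two] using (h (i + 1)).symm

end Cycle

lemma Function.Periodic.apply_natCast_eq_ite_even {R α : Type*} [NonAssocSemiring R] {f : R → α}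
    (hf : Periodic f 2) (m : ℕ) : f m = if Even m then f 0 else f 1 := by
  have hm : (m : R) = ((m % 2 : ℕ) : R) + (m / 2 : ℕ) * 2 := by
    exact_mod_cast congrArg (Nat.cast (R := R)) (Nat.mod_add_div' m 2).symm
  rw [hm, hf.nat_mul]
  rcases Nat.even_or_odd m with h | h
  · simp [Nat.even_iff.mp h, h]
  · simp [Nat.odd_iff.mp h, Nat.not_even_iff_odd.mpr h]

lemma Function.Periodic.apply_zero_eq_apply_one {n : ℕ} {α : Type*} {a : Fin (n + 1) → α}
    (ha : Periodic a 2) (hn : Even n) : a 0 = a 1 := by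
  have := ha.apply_natCast_eq_ite_even (n + 1)
  rwa [Fin.natCast_self, if_neg (by simpa [Nat.even_add_one] using hn)] at this

/-- On the cycle with `n+1` vertices, every labeling that is not the all-ones labeling and
(when `n` is odd) not one of the two alternating labelings is equivalent to a labeling
whose value at vertex 0 is 0. -/
theorem cycG_reduce_vertex_zero (n : ℕ) (hn : 2 ≤ n) (a : Fin (n + 1) → ZMod 2)
    (h1 : a ≠ fun _ => (1 : ZMod 2))
    (h2 : Odd n → a ≠ (fun v => if Even v.val then (1 : ZMod 2) else 0) ∧
      a ≠ (fun v => if Even v.val then (0 : ZMod 2) else 1)) :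
    ∃ b : Fin (n + 1) → ZMod 2, reederEquiv (cycG n) a b ∧ b 0 = 0 := by
  by_cases hdefect : ∃ i : Fin (n + 1), a (i - 1) ≠ a (i + 1)
  · obtain ⟨i, hi⟩ := hdefect
    rw [← Fin.cast_val_eq_self i] at hi
    exact exists_reederEquiv_apply_zero_eq_zero_of_ne hn i a hi
  push Not at hdefect
  have ha := periodic_two_of_forall_eq hdefect
  have ha_eq : ∀ v : Fin (n + 1), a v = if Even v.val then a 0 else a 1 := fun v => by
    simpa using ha.apply_natCast_eq_ite_even v.val
  refine ⟨a, .refl, ?_⟩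
  by_contra ha0
  replace ha0 := (zmod_two_eq_zero_or_eq_one _).resolve_left ha0
  rcases zmod_two_eq_zero_or_eq_one (a 1) with ha1 | ha1
  · rcases Nat.even_or_odd n with heven | hodd
    · exact absurd (ha.apply_zero_eq_apply_one heven) (by rw [ha0, ha1]; decide)
    · exact (h2 hodd).1 (funext fun v => by rw [ha_eq v, ha0, ha1])
  · exact h1 (funext fun v => by rw [ha_eq v, ha0, ha1, ite_self])
end

section
/- Swallowing Lemma for B_n: in the directed diagram B_n (a path 1,...,n where vertex n is short: the move T_{n-1} ignores vertex n's label but T_n adds a_{n-1} to a_n), if the restriction of a labeling to vertices 1,...,n-1 is nonzero, then (a_1,...,a_{n-1}, 0) is equivalent to (a_1,...,a_{n-1}, 1). -/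
/-- The move `T_i` on the diagram `B_n` (vertices `0,…,n-1`, with the last vertex short:
the long vertex `n-2` does not see the short vertex `n-1`, while `T` at the short vertex
adds the label of vertex `n-2`). -/
def moveB (n : ℕ) (i : Fin n) (a : Fin n → ZMod 2) : Fin n → ZMod 2 := fun j =>
  if j = i then
    a i + ∑ k ∈ Finset.univ.filter
      (fun k : Fin n => k.val + 1 = i.val ∨ (i.val + 1 = k.val ∧ k.val + 1 ≠ n)), a k
  else a j

/-- Equivalence of labelings of `B_n`: a finite sequence of moves. -/
def reederEquivB (n : ℕ) : (Fin n → ZMod 2) → (Fin n → ZMod 2) → Prop :=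
  Relation.ReflTransGen (fun a b => ∃ i, b = moveB n i a)

lemma zmod2_cases (x : ZMod 2) : x = 0 ∨ x = 1 := by revert x; decide

lemma moveB_apply_ne (n : ℕ) (i : Fin n) (a : Fin n → ZMod 2) (j : Fin n) (h : j ≠ i) :
    moveB n i a j = a j := by simp [moveB, h]

lemma moveB_self (n : ℕ) (i : Fin n) (a : Fin n → ZMod 2) :
    moveB n i a i = a i + ∑ k ∈ Finset.univ.filter
      (fun k : Fin n => k.val + 1 = i.val ∨ (i.val + 1 = k.val ∧ k.val + 1 ≠ n)), a k := by
  simp [moveB]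

lemma filter_eq_pair (n : ℕ) (i : Fin n) (h1 : 0 < i.val) (h2 : i.val + 2 < n) :
    Finset.univ.filter
      (fun k : Fin n => k.val + 1 = i.val ∨ (i.val + 1 = k.val ∧ k.val + 1 ≠ n))
      = {⟨i.val - 1, by omega⟩, ⟨i.val + 1, by omega⟩} := by
  ext k
  have hk := k.isLt
  simp only [Finset.mem_filter, Finset.mem_univ, true_and, Finset.mem_insert,
    Finset.mem_singleton, Fin.ext_iff]
  omega

lemma filter_eq_single (n : ℕ) (i : Fin n) (h1 : 0 < i.val) (h2 : n ≤ i.val + 2) :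
    Finset.univ.filter
      (fun k : Fin n => k.val + 1 = i.val ∨ (i.val + 1 = k.val ∧ k.val + 1 ≠ n))
      = {⟨i.val - 1, by have := i.isLt; omega⟩} := by
  ext k
  have hk := k.isLt
  have hi := i.isLt
  simp only [Finset.mem_filter, Finset.mem_univ, true_and, Finset.mem_singleton, Fin.ext_iff]
  omega

/-- If the vertex adjacent to the short vertex is nonzero, one short move flips the
short vertex and leaves all long vertices alone. -/
lemma flip_last (n : ℕ) (a : Fin n → ZMod 2) (j : Fin n) (hj : j.val + 2 = n)
    (hja : a j ≠ 0) :
    ∃ a', reederEquivB n a a' ∧ (∀ i : Fin n, i.val + 1 < n → a' i = a i) ∧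
      (∀ i : Fin n, i.val + 1 = n → a' i = a i + 1) := by
  have hjn := j.isLt
  set s : Fin n := ⟨j.val + 1, by omega⟩ with hs
  have hsv : s.val = j.val + 1 := rfl
  refine ⟨moveB n s a, Relation.ReflTransGen.single ⟨s, rfl⟩, ?_, ?_⟩
  · intro i hi
    exact moveB_apply_ne n s a i (fun hc => by rw [hc] at hi; omega)
  · intro i hi
    have hisv : i = s := Fin.ext (by omega)
    subst hisv
    rw [moveB_self, filter_eq_single n s (by omega) (by omega), Finset.sum_singleton]
    have e1 : (⟨s.val - 1, by have := s.isLt; omega⟩ : Fin n) = j := by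
      apply Fin.ext; show s.val - 1 = j.val; omega
    rw [e1]
    rcases zmod2_cases (a j) with h | h
    · exact absurd h hja
    · rw [h]

/-- Key lemma: if some long vertex is nonzero, we can flip the short vertex while
preserving all long vertices. Induction on the distance `d` to the short vertex. -/
lemma flipB (n : ℕ) : ∀ d : ℕ, ∀ a : Fin n → ZMod 2, ∀ j : Fin n,
    n ≤ j.val + 2 + d → j.val + 1 < n → a j ≠ 0 →
    ∃ a', reederEquivB n a a' ∧ (∀ i : Fin n, i.val + 1 < n → a' i = a i) ∧
      (∀ i : Fin n, i.val + 1 = n → a' i = a i + 1) := by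
  intro d
  induction d with
  | zero =>
    intro a j hd hj hja
    exact flip_last n a j (by omega) hja
  | succ d IH =>
    intro a j hd hj hja
    by_cases hend : n ≤ j.val + 2
    · exact flip_last n a j (by omega) hja
    push_neg at hend
    -- j.val + 2 < n, so the vertex j+1 is a long vertex
    set j1 : Fin n := ⟨j.val + 1, by omega⟩ with hj1
    have hj1v : j1.val = j.val + 1 := rfl
    have haj : a j = 1 := by
      rcases zmod2_cases (a j) with h | h
      · exact absurd h hja
      · exact h
    by_cases h1 : a j1 ≠ 0
    · exact IH a j1 (by omega) (by omega) h1
    push_neg at h1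
    by_cases h2 : j.val + 3 < n ∧ a ⟨j.val + 2, by omega⟩ ≠ 0
    · exact IH a ⟨j.val + 2, by omega⟩ (by simp only; omega) (by simp only; omega) h2.2
    -- Now the neighbour sum of j1 is a j = 1, so moving at j1 makes it nonzero.
    -- Conjugate: a ~ a1 := moveB j1 a, flip the short vertex of a1 (IH), move back at j1.
    · set a1 := moveB n j1 a with ha1
      have hS : ∑ k ∈ Finset.univ.filter
          (fun k : Fin n => k.val + 1 = j1.val ∨ (j1.val + 1 = k.val ∧ k.val + 1 ≠ n)),
          a k = 1 := by
        by_cases h3 : j1.val + 2 < n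
        · rw [filter_eq_pair n j1 (by omega) h3]
          rw [Finset.sum_pair (fun hc => by rw [Fin.ext_iff] at hc; simp only at hc; omega)]
          have e1 : (⟨j1.val - 1, by omega⟩ : Fin n) = j := by
            apply Fin.ext; show j1.val - 1 = j.val; omega
          have e2 : a (⟨j1.val + 1, by omega⟩ : Fin n) = 0 := by
            have e3 : (⟨j1.val + 1, by omega⟩ : Fin n) = (⟨j.val + 2, by omega⟩ : Fin n) := by
              apply Fin.ext; show j1.val + 1 = j.val + 2; omega
            rw [e3]
            by_contra hne
            exact h2 ⟨by omega, hne⟩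
          rw [e1, e2, haj, add_zero]
        · rw [filter_eq_single n j1 (by omega) (by omega), Finset.sum_singleton]
          have e1 : (⟨j1.val - 1, by have := j1.isLt; omega⟩ : Fin n) = j := by
            apply Fin.ext; show j1.val - 1 = j.val; omega
          rw [e1, haj]
      have ha1j1 : a1 j1 = 1 := by
        rw [ha1, moveB_self, hS, h1, zero_add]
      obtain ⟨a1', hequiv, hlong, hshort⟩ :=
        IH a1 j1 (by omega) (by omega) (by rw [ha1j1]; decide)
      refine ⟨moveB n j1 a1', ?_, ?_, ?_⟩
      · -- a ~ a1 ~ a1' ~ moveB j1 a1'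
        exact Relation.ReflTransGen.head ⟨j1, rfl⟩
          (hequiv.trans (Relation.ReflTransGen.single ⟨j1, rfl⟩))
      · intro i hi
        by_cases hij : i = j1
        · subst hij
          -- neighbours of j1 are long and unchanged, so the sum is again 1
          have hS' : ∑ k ∈ Finset.univ.filter
              (fun k : Fin n => k.val + 1 = j1.val ∨ (j1.val + 1 = k.val ∧ k.val + 1 ≠ n)),
              a1' k = 1 := by
            rw [← hS]
            apply Finset.sum_congr rfl
            intro k hk
            simp only [Finset.mem_filter, Finset.mem_univ, true_and] at hk
            have hk' : k.val + 1 < n := by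
              have := j1.isLt
              rcases hk with h | h
              · omega
              · omega
            rw [hlong k hk', ha1]
            exact moveB_apply_ne n j1 a k
              (fun hc => by rw [Fin.ext_iff] at hc; rcases hk with h | h <;> omega)
          rw [moveB_self, hS', hlong j1 (by omega), ha1j1, h1]
          decide
        · rw [moveB_apply_ne n j1 a1' i hij, hlong i hi, ha1,
            moveB_apply_ne n j1 a i hij]
      · intro i hi
        have hij : i ≠ j1 := fun hc => by rw [hc] at hi; omega
        rw [moveB_apply_ne n j1 a1' i hij, hshort i hi, ha1,
          moveB_apply_ne n j1 a i hij]

/-- Swallowing Lemma for `B_n`: if the restriction of a labeling to the long vertices is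
nonzero, then the labeling completed with 0 at the short vertex is equivalent to the one
completed with 1 at the short vertex. -/
theorem swallowing_lemma (n : ℕ) (hn : 2 ≤ n) (a : Fin n → ZMod 2)
    (ha : ∃ i : Fin n, i.val + 1 < n ∧ a i ≠ 0)
    (b c : Fin n → ZMod 2)
    (hb : ∀ i : Fin n, i.val + 1 < n → b i = a i)
    (hc : ∀ i : Fin n, i.val + 1 < n → c i = a i)
    (hb' : ∀ i : Fin n, i.val + 1 = n → b i = 0)
    (hc' : ∀ i : Fin n, i.val + 1 = n → c i = 1) :
    reederEquivB n b c := by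
  obtain ⟨i, hi1, hi2⟩ := ha
  obtain ⟨b', hequiv, hlong, hshort⟩ :=
    flipB n n b i (by have := i.isLt; omega) hi1 (by rw [hb i hi1]; exact hi2)
  have hbc : b' = c := by
    funext k
    have hk := k.isLt
    rcases Nat.lt_or_ge (k.val + 1) n with h | h
    · rw [hlong k h, hb k h, hc k h]
    · have h' : k.val + 1 = n := by omega
      rw [hshort k h', hb' k h', hc' k h', zero_add]
  rw [← hbc]
  exact hequiv
end

section
/- The number of equivalence classes of labelings of the diagram B_n under the (non-simply-laced) Reeder moves equals ⌈(n-1)/2⌉ + 2. -/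
namespace BnAux

lemma zmod2_cases (x : ZMod 2) : x = 0 ∨ x = 1 := by revert x; decide

lemma zmod2_add_self (x : ZMod 2) : x + x = 0 := by revert x; decide

/-- The path part of `a`, as a function on `ℕ` (zero outside `[0, n-2]`). -/
def Ap (n : ℕ) (a : Fin n → ZMod 2) (i : ℕ) : ZMod 2 :=
  if h : i < n - 1 then a ⟨i, by omega⟩ else 0

lemma sum_filter_eval (n : ℕ) (i : Fin n) (a : Fin n → ZMod 2) :
    ∑ k ∈ Finset.univ.filter
      (fun k : Fin n => k.val + 1 = i.val ∨ (i.val + 1 = k.val ∧ k.val + 1 ≠ n)), a k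
    = (if i.val = 0 then 0 else Ap n a (i.val - 1)) + Ap n a (i.val + 1) := by
  have hi := i.isLt
  by_cases h0 : i.val = 0 <;> by_cases h2 : i.val + 2 < n
  · have : Finset.univ.filter
        (fun k : Fin n => k.val + 1 = i.val ∨ (i.val + 1 = k.val ∧ k.val + 1 ≠ n))
        = {(⟨i.val + 1, by omega⟩ : Fin n)} := by
      ext k
      have hk := k.isLt
      simp only [Finset.mem_filter, Finset.mem_univ, true_and, Finset.mem_singleton,
        Fin.ext_iff]
      omega
    rw [this, Finset.sum_singleton, if_pos h0, Ap, dif_pos (by omega)]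
    simp
  · have : Finset.univ.filter
        (fun k : Fin n => k.val + 1 = i.val ∨ (i.val + 1 = k.val ∧ k.val + 1 ≠ n))
        = ∅ := by
      ext k
      have hk := k.isLt
      simp only [Finset.mem_filter, Finset.mem_univ, true_and, Finset.notMem_empty,
        iff_false]
      omega
    rw [this, Finset.sum_empty, if_pos h0, Ap, dif_neg (by omega)]
    simp
  · have : Finset.univ.filter
        (fun k : Fin n => k.val + 1 = i.val ∨ (i.val + 1 = k.val ∧ k.val + 1 ≠ n))
        = {(⟨i.val - 1, by omega⟩ : Fin n), (⟨i.val + 1, by omega⟩ : Fin n)} := by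
      ext k
      have hk := k.isLt
      simp only [Finset.mem_filter, Finset.mem_univ, true_and, Finset.mem_insert,
        Finset.mem_singleton, Fin.ext_iff]
      omega
    rw [this, Finset.sum_pair (by simp only [ne_eq, Fin.ext_iff]; omega)]
    rw [if_neg h0, Ap, Ap, dif_pos (by omega), dif_pos (by omega)]
  · have : Finset.univ.filter
        (fun k : Fin n => k.val + 1 = i.val ∨ (i.val + 1 = k.val ∧ k.val + 1 ≠ n))
        = {(⟨i.val - 1, by omega⟩ : Fin n)} := by
      ext k
      have hk := k.isLt
      simp only [Finset.mem_filter, Finset.mem_univ, true_and, Finset.mem_singleton,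
        Fin.ext_iff]
      omega
    rw [this, Finset.sum_singleton, if_neg h0, Ap, Ap, dif_pos (by omega),
      dif_neg (by omega)]
    simp

lemma moveB_apply_self (n : ℕ) (i : Fin n) (a : Fin n → ZMod 2) :
    moveB n i a i = a i + ((if i.val = 0 then 0 else Ap n a (i.val - 1)) + Ap n a (i.val + 1)) := by
  rw [moveB, if_pos rfl, sum_filter_eval]

lemma moveB_apply_ne (n : ℕ) (i : Fin n) (a : Fin n → ZMod 2) (j : Fin n) (h : j ≠ i) :
    moveB n i a j = a j := by
  rw [moveB, if_neg h]


lemma Ap_lt {n : ℕ} (a : Fin n → ZMod 2) {t : ℕ} (h : t < n - 1) :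
    Ap n a t = a ⟨t, by omega⟩ := dif_pos h

lemma Ap_ge {n : ℕ} (a : Fin n → ZMod 2) {t : ℕ} (h : ¬ t < n - 1) :
    Ap n a t = 0 := dif_neg h

lemma zmod2_A (x y z : ZMod 2) : x + (y + (x + z)) = y + z := by revert x y z; decide
lemma zmod2_B (x l y : ZMod 2) : (x + (l + y)) + y = l + x := by revert x l y; decide

lemma moveB_invol (n : ℕ) (i : Fin n) (a : Fin n → ZMod 2) :
    moveB n i (moveB n i a) = a := by
  funext j
  by_cases h : j = i
  · subst h
    rw [moveB_apply_self, moveB_apply_self]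
    have h2 : Ap n (moveB n j a) (j.val + 1) = Ap n a (j.val + 1) := by
      by_cases h' : j.val + 1 < n - 1
      · rw [Ap_lt _ h', Ap_lt _ h', moveB_apply_ne]
        simp only [ne_eq, Fin.ext_iff]; omega
      · rw [Ap_ge _ h', Ap_ge _ h']
    have h1 : (if j.val = 0 then 0 else Ap n (moveB n j a) (j.val - 1))
        = (if j.val = 0 then 0 else Ap n a (j.val - 1)) := by
      by_cases hj0 : j.val = 0
      · rw [if_pos hj0, if_pos hj0]
      · rw [if_neg hj0, if_neg hj0]
        by_cases h' : j.val - 1 < n - 1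
        · rw [Ap_lt _ h', Ap_lt _ h', moveB_apply_ne]
          simp only [ne_eq, Fin.ext_iff]; omega
        · rw [Ap_ge _ h', Ap_ge _ h']
    rw [h1, h2, add_assoc, zmod2_add_self, add_zero]
  · rw [moveB_apply_ne _ _ _ _ h, moveB_apply_ne _ _ _ _ h]

lemma Ap_move_ne {n : ℕ} (i : Fin n) (a : Fin n → ZMod 2) {t : ℕ} (ht : t ≠ i.val) :
    Ap n (moveB n i a) t = Ap n a t := by
  by_cases h' : t < n - 1
  · rw [Ap_lt _ h', Ap_lt _ h', moveB_apply_ne]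
    simp only [ne_eq, Fin.ext_iff]; exact ht
  · rw [Ap_ge _ h', Ap_ge _ h']

lemma Ap_move_self {n : ℕ} (i : Fin n) (a : Fin n → ZMod 2) (hi : i.val < n - 1) :
    Ap n (moveB n i a) i.val
      = Ap n a i.val + ((if i.val = 0 then 0 else Ap n a (i.val - 1)) + Ap n a (i.val + 1)) := by
  rw [Ap_lt _ hi, Ap_lt _ hi, Fin.eta, moveB_apply_self]

/-- The difference vector of the path part. -/
def C (n : ℕ) (a : Fin n → ZMod 2) : ℕ → ZMod 2
  | 0 => Ap n a 0
  | (j+1) => Ap n a j + Ap n a (j+1)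

lemma C_zero (n : ℕ) (a : Fin n → ZMod 2) : C n a 0 = Ap n a 0 := rfl
lemma C_succ (n : ℕ) (a : Fin n → ZMod 2) (j : ℕ) :
    C n a (j+1) = Ap n a j + Ap n a (j+1) := rfl

/-- Partial sums of `C` recover `Ap`. -/
lemma sum_C (n : ℕ) (a : Fin n → ZMod 2) (t : ℕ) :
    ∑ j ∈ Finset.range (t + 1), C n a j = Ap n a t := by
  induction t with
  | zero => simp [C]
  | succ t ih =>
      rw [Finset.sum_range_succ, ih, C_succ, ← add_assoc, zmod2_add_self, zero_add]

lemma C_move_ne {n : ℕ} (i : Fin n) (a : Fin n → ZMod 2) {j : ℕ}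
    (h1 : j ≠ i.val) (h2 : j ≠ i.val + 1) :
    C n (moveB n i a) j = C n a j := by
  cases j with
  | zero => rw [C_zero, C_zero, Ap_move_ne _ _ h1]
  | succ t =>
      rw [C_succ, C_succ, Ap_move_ne _ _ (by omega), Ap_move_ne _ _ (by omega)]

lemma C_move_self {n : ℕ} (i : Fin n) (a : Fin n → ZMod 2) (hi : i.val < n - 1) :
    C n (moveB n i a) i.val = C n a (i.val + 1) := by
  cases hiv : i.val with
  | zero =>
      rw [C_zero, C_succ, ← hiv, Ap_move_self _ _ hi, hiv]
      rw [if_pos rfl, zero_add]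
  | succ t =>
      rw [C_succ, C_succ, Ap_move_ne _ _ (by omega), ← hiv, Ap_move_self _ _ hi, hiv]
      rw [if_neg (by omega)]
      have : t + 1 - 1 = t := by omega
      rw [this, zmod2_A]

lemma C_move_succ {n : ℕ} (i : Fin n) (a : Fin n → ZMod 2) (hi : i.val < n - 1) :
    C n (moveB n i a) (i.val + 1) = C n a i.val := by
  rw [C_succ, Ap_move_self _ _ hi, Ap_move_ne _ _ (show i.val + 1 ≠ i.val by omega)]
  cases hiv : i.val with
  | zero =>
      rw [C_zero, if_pos rfl, zmod2_B, zero_add]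
  | succ t =>
      rw [C_succ, if_neg (by omega)]
      have : t + 1 - 1 = t := by omega
      rw [this, zmod2_B]


/-- weight of the difference vector -/
def wB (n : ℕ) (a : Fin n → ZMod 2) : ℕ :=
  ((Finset.range n).filter (fun j => C n a j = 1)).card

/-- path part is zero -/
def PZ (n : ℕ) (a : Fin n → ZMod 2) : Prop := ∀ t : ℕ, Ap n a t = 0

/-- last coordinate -/
def lastc (n : ℕ) (a : Fin n → ZMod 2) : ZMod 2 :=
  if h : n - 1 < n then a ⟨n - 1, h⟩ else 0

open Classical in
/-- the full invariant -/
noncomputable def fB (n : ℕ) (a : Fin n → ZMod 2) : ℕ :=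
  if PZ n a then (if lastc n a = 0 then 0 else 1) else wB n a / 2 + 1

/-- A long move swaps two entries of `C`, as a function `range n → ZMod 2`. -/
lemma C_move_eq_comp {n : ℕ} (i : Fin n) (hi : i.val < n - 1) (a : Fin n → ZMod 2) (j : ℕ) :
    C n (moveB n i a) j = C n a ((Equiv.swap i.val (i.val + 1)) j) := by
  rcases eq_or_ne j i.val with rfl | h1
  · rw [Equiv.swap_apply_left, C_move_self _ _ hi]
  · rcases eq_or_ne j (i.val + 1) with rfl | h2
    · rw [Equiv.swap_apply_right, C_move_succ _ _ hi]
    · rw [Equiv.swap_apply_of_ne_of_ne h1 h2, C_move_ne _ _ h1 h2]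

lemma swap_mem_range {n : ℕ} (i : Fin n) (hi : i.val < n - 1) (j : ℕ) :
    (Equiv.swap i.val (i.val + 1)) j ∈ Finset.range n ↔ j ∈ Finset.range n := by
  have hn := i.isLt
  rcases eq_or_ne j i.val with rfl | h1
  · rw [Equiv.swap_apply_left]; simp only [Finset.mem_range]; omega
  · rcases eq_or_ne j (i.val + 1) with rfl | h2
    · rw [Equiv.swap_apply_right]; simp only [Finset.mem_range]; omega
    · rw [Equiv.swap_apply_of_ne_of_ne h1 h2]

lemma wB_move_long {n : ℕ} (i : Fin n) (hi : i.val < n - 1) (a : Fin n → ZMod 2) :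
    wB n (moveB n i a) = wB n a := by
  unfold wB
  have himg : Finset.filter (fun j => C n (moveB n i a) j = 1) (Finset.range n)
      = (Finset.filter (fun j => C n a j = 1) (Finset.range n)).image
          (Equiv.swap i.val (i.val + 1)) := by
    ext j
    simp only [Finset.mem_filter, Finset.mem_image]
    constructor
    · rintro ⟨hj, hC⟩
      refine ⟨(Equiv.swap i.val (i.val + 1)) j, ⟨?_, ?_⟩, Equiv.swap_apply_self _ _ _⟩
      · exact (swap_mem_range i hi j).mpr hj
      · rw [← C_move_eq_comp i hi a j]; exact hC
    · rintro ⟨x, ⟨hx, hCx⟩, rfl⟩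
      refine ⟨(swap_mem_range i hi x).mpr hx, ?_⟩
      rw [C_move_eq_comp i hi a, Equiv.swap_apply_self]
      exact hCx
  rw [himg, Finset.card_image_of_injective _ (Equiv.injective _)]

lemma PZ_moveB_eq_self {n : ℕ} (i : Fin n) (a : Fin n → ZMod 2) (h : PZ n a) :
    moveB n i a = a := by
  funext j
  rcases eq_or_ne j i with rfl | hne
  · rw [moveB_apply_self]
    rw [h (j.val + 1)]
    rcases eq_or_ne j.val 0 with h0 | h0
    · rw [if_pos h0]; simp
    · rw [if_neg h0, h (j.val - 1)]; simp
  · exact moveB_apply_ne _ _ _ _ hne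

lemma PZ_move {n : ℕ} (i : Fin n) (a : Fin n → ZMod 2) :
    PZ n (moveB n i a) ↔ PZ n a := by
  constructor
  · intro h
    have := PZ_moveB_eq_self i _ h
    rw [moveB_invol] at this
    rw [this]
    exact h
  · intro h; rw [PZ_moveB_eq_self i a h]; exact h

lemma wB_move {n : ℕ} (i : Fin n) (a : Fin n → ZMod 2) (hi : i.val < n - 1) :
    wB n (moveB n i a) = wB n a := wB_move_long i hi a

/-- sum of C over range n is zero (n ≥ 1) -/
lemma sum_C_range {n : ℕ} (hn : 1 ≤ n) (a : Fin n → ZMod 2) :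
    ∑ j ∈ Finset.range n, C n a j = 0 := by
  obtain ⟨t, rfl⟩ : ∃ t, n = t + 1 := ⟨n - 1, by omega⟩
  rw [sum_C, Ap_ge]
  omega

lemma wB_even {n : ℕ} (hn : 1 ≤ n) (a : Fin n → ZMod 2) : 2 ∣ wB n a := by
  have h1 : ∑ j ∈ Finset.range n, C n a j
      = ∑ j ∈ Finset.range n, (if C n a j = 1 then (1 : ZMod 2) else 0) := by
    apply Finset.sum_congr rfl
    intro j _
    rcases zmod2_cases (C n a j) with h | h <;> simp [h]
  rw [sum_C_range hn, Finset.sum_boole] at h1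
  have h2 : ((wB n a : ℕ) : ZMod 2) = 0 := by
    rw [wB]; exact h1.symm
  rwa [ZMod.natCast_eq_zero_iff] at h2


lemma Ap_move_short {n : ℕ} (i : Fin n) (hi : i.val = n - 1) (a : Fin n → ZMod 2) (t : ℕ) :
    Ap n (moveB n i a) t = Ap n a t := by
  by_cases h' : t < n - 1
  · exact Ap_move_ne _ _ (by omega)
  · rw [Ap_ge _ h', Ap_ge _ h']

lemma C_move_short {n : ℕ} (i : Fin n) (hi : i.val = n - 1) (a : Fin n → ZMod 2) (j : ℕ) :
    C n (moveB n i a) j = C n a j := by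
  cases j with
  | zero => rw [C_zero, C_zero, Ap_move_short i hi]
  | succ t => rw [C_succ, C_succ, Ap_move_short i hi, Ap_move_short i hi]

lemma wB_move_short {n : ℕ} (i : Fin n) (hi : i.val = n - 1) (a : Fin n → ZMod 2) :
    wB n (moveB n i a) = wB n a := by
  unfold wB
  congr 1
  apply Finset.filter_congr
  intro j _
  rw [C_move_short i hi]

lemma fB_move {n : ℕ} (hn : 2 ≤ n) (i : Fin n) (a : Fin n → ZMod 2) :
    fB n (moveB n i a) = fB n a := by
  by_cases h : PZ n a
  · rw [PZ_moveB_eq_self i a h]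
  · have h' : ¬ PZ n (moveB n i a) := by rw [PZ_move]; exact h
    rw [fB, fB, if_neg h, if_neg h']
    rcases lt_or_ge i.val (n - 1) with hi | hi
    · rw [wB_move i a hi]
    · have : i.val = n - 1 := by have := i.isLt; omega
      rw [wB_move_short i this]

lemma wB_le {n : ℕ} (a : Fin n → ZMod 2) : wB n a ≤ n := by
  calc wB n a ≤ (Finset.range n).card := Finset.card_filter_le _ _
  _ = n := Finset.card_range n

lemma fB_lt {n : ℕ} (hn : 2 ≤ n) (a : Fin n → ZMod 2) : fB n a < n / 2 + 2 := by
  rw [fB]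
  split_ifs
  · omega
  · omega
  · have h1 := wB_le a
    have : wB n a / 2 ≤ n / 2 := Nat.div_le_div_right h1
    omega

/-- zero weight means zero path part -/
lemma C_ge {n : ℕ} (hn : 1 ≤ n) (a : Fin n → ZMod 2) {j : ℕ} (hj : n ≤ j) :
    C n a j = 0 := by
  cases j with
  | zero => omega
  | succ t => rw [C_succ, Ap_ge _ (by omega), Ap_ge _ (by omega), add_zero]

lemma PZ_of_wB_eq_zero {n : ℕ} (hn : 1 ≤ n) (a : Fin n → ZMod 2) (h : wB n a = 0) :
    PZ n a := by
  have hC : ∀ j, C n a j = 0 := by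
    intro j
    rcases lt_or_ge j n with hj | hj
    · rcases zmod2_cases (C n a j) with h0 | h1
      · exact h0
      · exfalso
        have : j ∈ (Finset.range n).filter (fun j => C n a j = 1) :=
          Finset.mem_filter.mpr ⟨Finset.mem_range.mpr hj, h1⟩
        rw [wB, Finset.card_eq_zero] at h
        simp [h] at this
    · exact C_ge hn a hj
  intro t
  rw [← sum_C]
  apply Finset.sum_eq_zero
  intro j _
  exact hC j


/-- canonical representatives -/
def repB (n : ℕ) : ℕ → (Fin n → ZMod 2)
  | 0 => fun _ => 0
  | 1 => fun j => if j.val = n - 1 then 1 else 0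
  | (k+2) => fun j =>
      if j.val < n - 1 ∧ n - (2*k+2) ≤ j.val ∧ (n - j.val) % 2 = 0 then 1 else 0

lemma Ap_rep0 {n : ℕ} (t : ℕ) : Ap n (repB n 0) t = 0 := by
  by_cases h : t < n - 1
  · rw [Ap_lt _ h]; rfl
  · exact Ap_ge _ h

lemma Ap_rep1 {n : ℕ} (t : ℕ) : Ap n (repB n 1) t = 0 := by
  by_cases h : t < n - 1
  · rw [Ap_lt _ h]
    show (if t = n - 1 then (1 : ZMod 2) else 0) = 0
    rw [if_neg (by omega)]
  · exact Ap_ge _ h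

lemma Ap_rep2 {n : ℕ} (k t : ℕ) :
    Ap n (repB n (k+2)) t
      = if t < n - 1 ∧ n - (2*k+2) ≤ t ∧ (n - t) % 2 = 0 then 1 else 0 := by
  by_cases h : t < n - 1
  · rw [Ap_lt _ h]; rfl
  · rw [Ap_ge _ h, if_neg (by tauto)]

lemma C_rep2 {n : ℕ} (hn : 2 ≤ n) (k : ℕ) (hk : 2*k+2 ≤ n) (j : ℕ) :
    C n (repB n (k+2)) j = if n - (2*k+2) ≤ j ∧ j < n then 1 else 0 := by
  cases j with
  | zero =>
      rw [C_zero, Ap_rep2]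
      split_ifs <;> first | decide | (exfalso; omega)
  | succ t =>
      rw [C_succ, Ap_rep2, Ap_rep2]
      split_ifs <;> first | decide | (exfalso; omega)

lemma wB_rep2 {n : ℕ} (hn : 2 ≤ n) (k : ℕ) (hk : 2*k+2 ≤ n) :
    wB n (repB n (k+2)) = 2*k+2 := by
  have hset : (Finset.range n).filter (fun j => C n (repB n (k+2)) j = 1)
      = Finset.Ico (n - (2*k+2)) n := by
    ext j
    rw [Finset.mem_filter, Finset.mem_range, Finset.mem_Ico, C_rep2 hn k hk]
    by_cases h : n - (2*k+2) ≤ j ∧ j < n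
    · rw [if_pos h]
      constructor
      · rintro ⟨h1, -⟩; exact h
      · rintro ⟨h1, h2⟩; exact ⟨h2, rfl⟩
    · rw [if_neg h]
      constructor
      · rintro ⟨-, h0⟩; exact absurd h0 (by decide)
      · intro hc; exact absurd hc h
  rw [wB, hset, Nat.card_Ico]
  omega

lemma not_PZ_rep2 {n : ℕ} (hn : 2 ≤ n) (k : ℕ) (hk : 2*k+2 ≤ n) :
    ¬ PZ n (repB n (k+2)) := by
  intro h
  have := h (n - 2)
  rw [Ap_rep2, if_pos (by omega)] at this
  exact absurd this (by decide)

lemma fB_rep {n : ℕ} (hn : 2 ≤ n) (j : ℕ) (hj : j < n / 2 + 2) :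
    fB n (repB n j) = j := by
  match j with
  | 0 =>
      have hp : PZ n (repB n 0) := fun t => Ap_rep0 t
      rw [fB, if_pos hp, lastc, dif_pos (by omega)]
      show (if (0 : ZMod 2) = 0 then 0 else 1) = 0
      rw [if_pos rfl]
  | 1 =>
      have hp : PZ n (repB n 1) := fun t => Ap_rep1 t
      rw [fB, if_pos hp, lastc, dif_pos (by omega)]
      rw [if_neg]
      show ¬ (if n - 1 = n - 1 then (1 : ZMod 2) else 0) = 0
      rw [if_pos rfl]
      decide
  | (k+2) =>
      have hk : 2*k+2 ≤ n := by omega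
      rw [fB, if_neg (not_PZ_rep2 hn k hk), wB_rep2 hn k hk]
      omega


/-- the one-step relation -/
abbrev RelB (n : ℕ) : (Fin n → ZMod 2) → (Fin n → ZMod 2) → Prop :=
  fun a b => ∃ i, b = moveB n i a

def NoViol (n : ℕ) (a : Fin n → ZMod 2) : Prop :=
  ∀ j, j + 1 < n → ¬(C n a j = 1 ∧ C n a (j+1) = 0)

def pot (n : ℕ) (a : Fin n → ZMod 2) : ℕ :=
  ∑ j ∈ Finset.range n, (if C n a j = 1 then n - j else 0)

lemma pot_step {n : ℕ} (a : Fin n → ZMod 2) (j : ℕ) (hj : j + 1 < n)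
    (h1 : C n a j = 1) (h0 : C n a (j+1) = 0) :
    ∃ b, RelB n a b ∧ pot n b < pot n a := by
  have hjn : j < n - 1 := by omega
  set i : Fin n := ⟨j, by omega⟩ with hi
  have hiv : i.val = j := rfl
  refine ⟨moveB n i a, ⟨i, rfl⟩, ?_⟩
  have hjm : j ∈ Finset.range n := Finset.mem_range.mpr (by omega)
  have hj1m : j + 1 ∈ (Finset.range n).erase j :=
    Finset.mem_erase.mpr ⟨by omega, Finset.mem_range.mpr (by omega)⟩
  have hsplit : ∀ x : Fin n → ZMod 2, pot n x
      = (if C n x j = 1 then n - j else 0)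
        + ((if C n x (j+1) = 1 then n - (j+1) else 0)
          + ∑ j' ∈ ((Finset.range n).erase j).erase (j+1),
              (if C n x j' = 1 then n - j' else 0)) := by
    intro x
    rw [pot, ← Finset.add_sum_erase _ _ hjm, ← Finset.add_sum_erase _ _ hj1m]
  rw [hsplit a, hsplit (moveB n i a)]
  have hrest : ∑ j' ∈ ((Finset.range n).erase j).erase (j+1),
        (if C n (moveB n i a) j' = 1 then n - j' else 0)
      = ∑ j' ∈ ((Finset.range n).erase j).erase (j+1),
        (if C n a j' = 1 then n - j' else 0) := by
    apply Finset.sum_congr rfl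
    intro j' hj'
    rw [Finset.mem_erase, Finset.mem_erase] at hj'
    rw [C_move_ne i a (by rw [hiv]; exact hj'.2.1) (by rw [hiv]; omega)]
  rw [hrest]
  have e1 : C n (moveB n i a) j = 0 := by
    have := C_move_self i a (by rw [hiv]; omega)
    rw [hiv] at this
    rw [this, h0]
  have e2 : C n (moveB n i a) (j+1) = 1 := by
    have := C_move_succ i a (by rw [hiv]; omega)
    rw [hiv] at this
    rw [this, h1]
  rw [e1, e2, h1, h0]
  rw [if_neg (show ¬ (0:ZMod 2) = 1 by decide), if_pos (show (1:ZMod 2) = 1 from rfl),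
    if_pos (show (1:ZMod 2) = 1 from rfl), if_neg (show ¬ (0:ZMod 2) = 1 by decide)]
  omega

lemma exists_noViol {n : ℕ} (a : Fin n → ZMod 2) :
    ∃ b, Relation.ReflTransGen (RelB n) a b ∧ NoViol n b := by
  suffices h : ∀ N (a : Fin n → ZMod 2), pot n a ≤ N →
      ∃ b, Relation.ReflTransGen (RelB n) a b ∧ NoViol n b from h (pot n a) a le_rfl
  intro N
  induction N with
  | zero =>
      intro a ha
      by_cases hv : NoViol n a
      · exact ⟨a, Relation.ReflTransGen.refl, hv⟩
      · exfalso
        rw [NoViol] at hv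
        push_neg at hv
        obtain ⟨j, hj, h1, h0⟩ := hv
        obtain ⟨b, -, hlt⟩ := pot_step a j hj h1 h0
        omega
  | succ N ih =>
      intro a ha
      by_cases hv : NoViol n a
      · exact ⟨a, Relation.ReflTransGen.refl, hv⟩
      · rw [NoViol] at hv
        push_neg at hv
        obtain ⟨j, hj, h1, h0⟩ := hv
        obtain ⟨b, hab, hlt⟩ := pot_step a j hj h1 h0
        obtain ⟨c, hbc, hc⟩ := ih b (by omega)
        exact ⟨c, Relation.ReflTransGen.head hab hbc, hc⟩

lemma noViol_mono {n : ℕ} (b : Fin n → ZMod 2) (hb : NoViol n b) :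
    ∀ d j, j + d < n → C n b j = 1 → C n b (j + d) = 1 := by
  intro d
  induction d with
  | zero => intro j _ h; simpa using h
  | succ d ih =>
      intro j hjd h1
      have hd : C n b (j + d) = 1 := ih j (by omega) h1
      have hnv := hb (j + d) (by omega)
      rcases zmod2_cases (C n b (j + d + 1)) with h' | h'
      · exact absurd ⟨hd, h'⟩ hnv
      · have : j + (d + 1) = j + d + 1 := by omega
        rw [this]; exact h'

lemma noViol_filter_eq {n : ℕ} (b : Fin n → ZMod 2) (hb : NoViol n b) :
    (Finset.range n).filter (fun j => C n b j = 1) = Finset.Ico (n - wB n b) n := by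
  have hwle := wB_le b
  apply Finset.eq_of_subset_of_card_le
  · intro j hjS
    rw [Finset.mem_filter, Finset.mem_range] at hjS
    obtain ⟨hj, hC⟩ := hjS
    have hsub2 : Finset.Ico j n ⊆ (Finset.range n).filter (fun j => C n b j = 1) := by
      intro k hk
      rw [Finset.mem_Ico] at hk
      rw [Finset.mem_filter, Finset.mem_range]
      refine ⟨hk.2, ?_⟩
      have : j + (k - j) = k := by omega
      rw [← this]
      exact noViol_mono b hb (k - j) j (by omega) hC
    have hcard : n - j ≤ wB n b := by
      have := Finset.card_le_card hsub2
      rw [Nat.card_Ico] at this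
      exact this
    rw [Finset.mem_Ico]
    omega
  · rw [Nat.card_Ico, wB]
    omega

lemma C_of_noViol {n : ℕ} (hn : 1 ≤ n) (b : Fin n → ZMod 2) (hb : NoViol n b) (j : ℕ) :
    C n b j = if n - wB n b ≤ j ∧ j < n then 1 else 0 := by
  rcases lt_or_ge j n with hj | hj
  · have hiff := Finset.ext_iff.mp (noViol_filter_eq b hb) j
    rw [Finset.mem_filter, Finset.mem_range, Finset.mem_Ico] at hiff
    rcases zmod2_cases (C n b j) with hc | hc
    · rw [hc, if_neg]
      intro hcond
      have := hiff.mpr ⟨hcond.1, hj⟩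
      rw [hc] at this
      exact absurd this.2 (by decide)
    · rw [hc, if_pos]
      have := hiff.mp ⟨hj, hc⟩
      exact ⟨this.1, hj⟩
  · rw [C_ge hn b hj, if_neg (by omega)]

lemma Ap_of_noViol {n : ℕ} (hn : 2 ≤ n) (b : Fin n → ZMod 2) (hb : NoViol n b)
    (_hnz : ¬ PZ n b) (k : ℕ) (hW : wB n b = 2*k+2) :
    ∀ t, Ap n b t = Ap n (repB n (k+2)) t := by
  have hk : 2*k+2 ≤ n := by have := wB_le b; omega
  intro t
  rw [← sum_C, ← sum_C]
  apply Finset.sum_congr rfl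
  intro j _
  rw [C_of_noViol (by omega) b hb, C_rep2 hn k hk, hW]


lemma fB_rtg {n : ℕ} (hn : 2 ≤ n) {a b : Fin n → ZMod 2}
    (h : Relation.ReflTransGen (RelB n) a b) : fB n b = fB n a := by
  induction h with
  | refl => rfl
  | tail h1 h2 ih =>
      obtain ⟨i, rfl⟩ := h2
      rw [fB_move hn]
      exact ih

lemma PZ_rtg {n : ℕ} {a b : Fin n → ZMod 2}
    (h : Relation.ReflTransGen (RelB n) a b) : PZ n b ↔ PZ n a := by
  induction h with
  | refl => exact Iff.rfl
  | tail h1 h2 ih =>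
      obtain ⟨i, rfl⟩ := h2
      rw [PZ_move]
      exact ih

lemma reach_rep {n : ℕ} (hn : 2 ≤ n) (a : Fin n → ZMod 2) :
    Relation.ReflTransGen (RelB n) a (repB n (fB n a)) := by
  by_cases hp : PZ n a
  · have hae : ∀ j : Fin n, j.val < n - 1 → a j = 0 := by
      intro j hj
      have h := hp j.val
      rw [Ap_lt _ hj, Fin.eta] at h
      exact h
    rcases zmod2_cases (lastc n a) with hl | hl
    · have hres : a = repB n (fB n a) := by
        rw [fB, if_pos hp, if_pos hl]
        funext j
        rcases lt_or_ge j.val (n-1) with hj | hj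
        · rw [hae j hj]; rfl
        · have hj' : j = (⟨n-1, by omega⟩ : Fin n) := Fin.ext (by have := j.isLt; simp; omega)
          rw [hj']
          show a _ = 0
          rw [lastc, dif_pos (by omega)] at hl
          exact hl
      rw [← hres]
    · have hres : a = repB n (fB n a) := by
        rw [fB, if_pos hp, if_neg (by rw [hl]; decide)]
        funext j
        rcases lt_or_ge j.val (n-1) with hj | hj
        · rw [hae j hj]
          show (0 : ZMod 2) = if j.val = n - 1 then 1 else 0
          rw [if_neg (by omega)]
        · have hj' : j = (⟨n-1, by omega⟩ : Fin n) := Fin.ext (by have := j.isLt; simp; omega)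
          rw [hj']
          show a _ = if n - 1 = n - 1 then 1 else 0
          rw [if_pos rfl, lastc, dif_pos (by omega)] at *
          exact hl
      rw [← hres]
  · obtain ⟨b, hab, hb⟩ := exists_noViol a
    have hfb : fB n b = fB n a := fB_rtg hn hab
    have hpb : ¬ PZ n b := fun h => hp ((PZ_rtg hab).mp h)
    have hWev := wB_even (show 1 ≤ n by omega) b
    have hWnz : wB n b ≠ 0 := fun h => hpb (PZ_of_wB_eq_zero (by omega) b h)
    obtain ⟨k, hk⟩ : ∃ k, wB n b = 2*k+2 := ⟨wB n b / 2 - 1, by omega⟩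
    have hkn : 2*k+2 ≤ n := by have := wB_le b; omega
    have hApb := Ap_of_noViol hn b hb hpb k hk
    have hfb2 : fB n b = k + 2 := by rw [fB, if_neg hpb, hk]; omega
    have hpath : ∀ j : Fin n, j.val < n - 1 → b j = repB n (k+2) j := by
      intro j hj
      have h := hApb j.val
      rw [Ap_lt _ hj, Ap_lt _ hj, Fin.eta] at h
      exact h
    rw [← hfb, hfb2]
    rcases zmod2_cases (b ⟨n-1, by omega⟩) with hl | hl
    · have hbr : b = repB n (k+2) := by
        funext j
        rcases lt_or_ge j.val (n-1) with hj | hj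
        · exact hpath j hj
        · have hj' : j = (⟨n-1, by omega⟩ : Fin n) := Fin.ext (by have := j.isLt; simp; omega)
          rw [hj', hl]
          show (0 : ZMod 2) = if (n-1 < n - 1 ∧ n - (2*k+2) ≤ n-1 ∧ (n - (n-1)) % 2 = 0) then 1 else 0
          rw [if_neg (by omega)]
      rw [← hbr]
      exact hab
    · set i : Fin n := (⟨n-1, by omega⟩ : Fin n) with hidef
      have hmv : moveB n i b = repB n (k+2) := by
        funext j
        rcases lt_or_ge j.val (n-1) with hj | hj
        · rw [moveB_apply_ne _ _ _ _ (by rw [hidef]; simp only [ne_eq, Fin.ext_iff]; omega)]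
          exact hpath j hj
        · have hj' : j = i := Fin.ext (by rw [hidef]; have := j.isLt; simp; omega)
          rw [hj', moveB_apply_self]
          have hiv : i.val = n - 1 := rfl
          rw [hiv, if_neg (by omega), Ap_ge b (show ¬ (n - 1 + 1 < n - 1) by omega)]
          have h2 : Ap n b (n-1-1) = 1 := by
            rw [hApb (n-1-1), Ap_rep2, if_pos (by omega)]
          rw [h2, hl, add_zero]
          show (1 : ZMod 2) + 1 = repB n (k+2) i
          show (1 : ZMod 2) + 1
            = if (i.val < n - 1 ∧ n - (2*k+2) ≤ i.val ∧ (n - i.val) % 2 = 0) then 1 else 0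
          rw [hiv, if_neg (by omega)]
          decide
      exact hab.tail ⟨i, hmv.symm⟩

lemma quot_eq_of_rtg {n : ℕ} {a b : Fin n → ZMod 2}
    (h : Relation.ReflTransGen (RelB n) a b) :
    Quot.mk (RelB n) a = Quot.mk (RelB n) b := by
  induction h with
  | refl => rfl
  | tail h1 h2 ih => exact ih.trans (Quot.sound h2)

noncomputable def quotEquiv (n : ℕ) (hn : 2 ≤ n) : Quot (RelB n) ≃ Fin (n / 2 + 2) where
  toFun := Quot.lift (fun a => (⟨fB n a, fB_lt hn a⟩ : Fin (n/2+2)))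
    (by
      intro a b hab
      obtain ⟨i, rfl⟩ := hab
      exact (Fin.ext (fB_move hn i a)).symm)
  invFun := fun j => Quot.mk (RelB n) (repB n j.val)
  left_inv := by
    apply Quot.ind
    intro a
    exact (quot_eq_of_rtg (reach_rep hn a)).symm
  right_inv := by
    intro j
    exact Fin.ext (fB_rep hn j.val j.isLt)

end BnAux

/-- The number of equivalence classes of labelings of `B_n` equals `⌈(n-1)/2⌉ + 2`. -/
theorem Bn_card_classes (n : ℕ) (hn : 2 ≤ n) :
    Nat.card (Quot (fun a b : Fin n → ZMod 2 => ∃ i, b = moveB n i a)) =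
      ((n - 1) + 1) / 2 + 2 := by
  have hmain : Nat.card (Quot (BnAux.RelB n)) = n / 2 + 2 := by
    rw [Nat.card_congr (BnAux.quotEquiv n hn), Nat.card_eq_fintype_card, Fintype.card_fin]
  have h2 : (n - 1) + 1 = n := by omega
  rw [h2]
  exact hmain
end

section
/- The number of equivalence classes of labelings of C_n under the Reeder moves equals n + 1. -/
/-- The move `T_i` on the diagram `C_n` (vertices `0,…,n-1`, with the last vertex long:
`T` at the last vertex is the identity, while all other vertices see both of their
path-neighbors). -/
def moveC (n : ℕ) (i : Fin n) (a : Fin n → ZMod 2) : Fin n → ZMod 2 := fun j =>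
  if j = i then
    a i + ∑ k ∈ Finset.univ.filter
      (fun k : Fin n => (k.val + 1 = i.val ∨ i.val + 1 = k.val) ∧ i.val + 1 ≠ n), a k
  else a j

/-!
Write `d a j = a j + a (j - 1)` (with `a (-1) = 0`); `a ↦ d a` is a bijection of labelings.
For `i < n - 1` the move `T_i` exchanges `d a i` and `d a (i + 1)`, and `T_{n-1}` does nothing.
Adjacent transpositions generate the symmetric group, so two labelings are equivalent exactly
when their derivatives have the same number of ones, and that number takes every value `0, …, n`.
-/

open Finset Equiv

section FiberPerm

variable {α β : Type*} [Fintype α] [DecidableEq β]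

theorem exists_perm_comp_eq_of_card_fiber_eq {f g : α → β}
    (h : ∀ z, Fintype.card {x // g x = z} = Fintype.card {x // f x = z}) :
    ∃ σ : Perm α, g = f ∘ σ :=
  ⟨ofFiberEquiv fun z => Fintype.equivOfCardEq (h z),
    funext fun x => (ofFiberEquiv_map _ x).symm⟩

def weight (c : α → ZMod 2) : ℕ := Fintype.card {x // c x = 1}

theorem weight_comp_perm (c : α → ZMod 2) (σ : Perm α) : weight (c ∘ σ) = weight c :=
  Fintype.card_congr (σ.subtypeEquiv fun _ => Iff.rfl)

theorem weight_le (c : α → ZMod 2) : weight c ≤ Fintype.card α :=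
  Fintype.card_subtype_le _

theorem exists_perm_comp_eq_of_weight_eq {c c' : α → ZMod 2} (h : weight c' = weight c) :
    ∃ σ : Perm α, c' = c ∘ σ := by
  have card_zero (d : α → ZMod 2) :
      Fintype.card {x // d x = 0} = Fintype.card α - weight d := by
    rw [weight, ← Fintype.card_subtype_compl]
    exact Fintype.card_congr (subtypeEquivRight fun x => by
      generalize d x = z; revert z; decide)
  refine exists_perm_comp_eq_of_card_fiber_eq fun z => ?_
  rcases (by decide : ∀ z : ZMod 2, z = 0 ∨ z = 1) z with rfl | rfl
  · rw [card_zero, card_zero, h]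
  · exact h

end FiberPerm

section Labelings

variable {n : ℕ}

def prevLabel (a : Fin n → ZMod 2) (j : Fin n) : ZMod 2 := ∑ k with k.val + 1 = j.val, a k

/-- `labelDiff a j = a j + a (j - 1)`, with `a (-1) = 0`. -/
def labelDiff (a : Fin n → ZMod 2) (j : Fin n) : ZMod 2 := a j + prevLabel a j

theorem prevLabel_congr {a b : Fin n → ZMod 2} {j : Fin n}
    (h : ∀ k : Fin n, k.val + 1 = j.val → a k = b k) : prevLabel a j = prevLabel b j :=
  sum_congr rfl fun k hk => h k (mem_filter.mp hk).2

theorem prevLabel_succ (a : Fin n → ZMod 2) (i : Fin n) (h : i.val + 1 < n) :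
    prevLabel a ⟨i.val + 1, h⟩ = a i := by
  rw [prevLabel, sum_eq_single_of_mem i (by simp)]
  intro k hk hki
  exact absurd (Fin.ext (by simpa using hk)) hki

theorem prevLabel_update_of_ne (a : Fin n → ZMod 2) {i j : Fin n} (x : ZMod 2)
    (h : i.val + 1 ≠ j.val) : prevLabel (Function.update a i x) j = prevLabel a j :=
  prevLabel_congr fun k hk => Function.update_of_ne (by rintro rfl; exact h hk) _ _

theorem moveC_of_succ_eq (a : Fin n → ZMod 2) (i : Fin n) (h : i.val + 1 = n) :
    moveC n i a = a := by
  funext j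
  by_cases hj : j = i <;> simp [moveC, h, hj]

theorem moveC_of_succ_lt (a : Fin n → ZMod 2) (i : Fin n) (h : i.val + 1 < n) :
    moveC n i a = Function.update a i (a i + (prevLabel a i + a ⟨i.val + 1, h⟩)) := by
  funext j
  rw [moveC, Function.update_apply]
  congr 2
  rw [filter_congr (q := fun k : Fin n => k.val + 1 = i.val ∨ k = ⟨i.val + 1, h⟩)
    (fun k _ => by simp [Fin.ext_iff]; omega), filter_or, sum_union, prevLabel]
  · simp [filter_eq']
  · exact disjoint_filter.mpr fun k _ hk hk' => by simp [Fin.ext_iff] at hk'; omega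

theorem labelDiff_moveC (a : Fin n → ZMod 2) (i : Fin n) (h : i.val + 1 < n) :
    labelDiff (moveC n i a) = labelDiff a ∘ swap i ⟨i.val + 1, h⟩ := by
  set i' : Fin n := ⟨i.val + 1, h⟩
  funext j
  rw [moveC_of_succ_lt a i h, Function.comp_apply, labelDiff, labelDiff]
  by_cases hj : j = i
  · subst hj
    rw [swap_apply_left, prevLabel_succ, prevLabel_update_of_ne _ _ (by omega)]
    simp only [Function.update_self]
    grind
  by_cases hj' : j = i'
  · subst hj'
    rw [swap_apply_right, prevLabel_succ, Function.update_of_ne hj]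
    simp only [Function.update_self]
    grind
  · rw [swap_apply_of_ne_of_ne hj hj', Function.update_of_ne hj,
      prevLabel_update_of_ne _ _ fun hij => hj' (Fin.ext hij.symm)]

theorem labelDiff_injective :
    Function.Injective (labelDiff : (Fin n → ZMod 2) → Fin n → ZMod 2) := by
  intro a b hab
  funext j
  induction j using WellFoundedLT.induction with
  | _ j ih =>
    have hprev : prevLabel a j = prevLabel b j :=
      prevLabel_congr fun k hk => ih k (Fin.lt_def.mpr (by omega))
    simpa [labelDiff, hprev] using congrFun hab j

theorem labelDiff_surjective :
    Function.Surjective (labelDiff : (Fin n → ZMod 2) → Fin n → ZMod 2) :=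
  Finite.injective_iff_surjective.mp labelDiff_injective

abbrev MoveRel (n : ℕ) (a b : Fin n → ZMod 2) : Prop := ∃ i, b = moveC n i a

theorem weight_labelDiff_moveC (a : Fin n → ZMod 2) (i : Fin n) :
    weight (labelDiff (moveC n i a)) = weight (labelDiff a) := by
  rcases (Nat.succ_le_of_lt i.isLt).eq_or_lt with h | h
  · rw [moveC_of_succ_eq a i h]
  · rw [labelDiff_moveC a i h, weight_comp_perm]

def classWeight : Quot (MoveRel n) → ℕ :=
  Quot.lift (fun a => weight (labelDiff a)) fun a _ ⟨i, hb⟩ =>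
    hb ▸ (weight_labelDiff_moveC a i).symm

theorem classWeight_lt (q : Quot (MoveRel n)) : classWeight q < n + 1 := by
  induction q using Quot.ind
  exact Nat.lt_succ_of_le ((weight_le _).trans_eq (Fintype.card_fin n))

theorem quot_mk_eq_of_labelDiff_eq_comp {a b : Fin n → ZMod 2} (σ : Perm (Fin n))
    (h : labelDiff b = labelDiff a ∘ σ) : Quot.mk (MoveRel n) a = Quot.mk _ b := by
  obtain _ | m := n
  · exact congrArg _ (Subsingleton.elim a b)
  have hσ : σ ∈ Submonoid.closure (Set.range fun i : Fin m => swap i.castSucc i.succ) :=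
    Perm.mclosure_swap_castSucc_succ m ▸ Submonoid.mem_top σ
  induction hσ using Submonoid.closure_induction_left generalizing a with
  | one => exact congrArg _ (labelDiff_injective h).symm
  | mul_left _ hτ ρ _ ih =>
    obtain ⟨i, rfl⟩ := hτ
    refine (Quot.sound ⟨i.castSucc, rfl⟩).trans (ih ?_)
    rw [h, labelDiff_moveC a i.castSucc i.succ.isLt]
    rfl

theorem quot_mk_eq_of_weight_eq {a b : Fin n → ZMod 2}
    (h : weight (labelDiff b) = weight (labelDiff a)) :
    Quot.mk (MoveRel n) a = Quot.mk _ b :=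
  let ⟨σ, hσ⟩ := exists_perm_comp_eq_of_weight_eq h
  quot_mk_eq_of_labelDiff_eq_comp σ hσ

theorem exists_weight_labelDiff_eq {k : ℕ} (hk : k ≤ n) :
    ∃ a : Fin n → ZMod 2, weight (labelDiff a) = k := by
  obtain ⟨a, ha⟩ := labelDiff_surjective fun j : Fin n => if j.val < k then (1 : ZMod 2) else 0
  refine ⟨a, ?_⟩
  rw [ha, weight, Fintype.card_subtype]
  simpa [hk] using Fin.card_filter_val_lt (n := n) (m := k)

end Labelings

theorem Cn_card_classes_general (n : ℕ) :
    Nat.card (Quot (fun a b : Fin n → ZMod 2 => ∃ i, b = moveC n i a)) = n + 1 := by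
  let F : Quot (MoveRel n) → Fin (n + 1) := fun q => ⟨classWeight q, classWeight_lt q⟩
  have hF : Function.Bijective F := by
    refine ⟨?_, fun k => ?_⟩
    · rintro ⟨a⟩ ⟨b⟩ h
      exact quot_mk_eq_of_weight_eq (congrArg Fin.val h).symm
    · obtain ⟨a, ha⟩ := exists_weight_labelDiff_eq (Nat.lt_succ_iff.mp k.isLt)
      exact ⟨Quot.mk _ a, Fin.ext ha⟩
  rw [Nat.card_eq_of_bijective F hF, Nat.card_eq_fintype_card, Fintype.card_fin]

/-- The number of equivalence classes of labelings of `C_n` equals `n + 1`. -/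
theorem Cn_card_classes (n : ℕ) (hn : 3 ≤ n) :
    Nat.card (Quot (fun a b : Fin n → ZMod 2 => ∃ i, b = moveC n i a)) = n + 1 :=
  Cn_card_classes_general n
end
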